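/- arXiv:2110.08359 — 11 statements merged into one kernel-verified Lean document; each statement's English description precedes it below -/
import Mathlib

section
/- Let φ : ℝ → ℝ be continuously differentiable with φ'(0) < 0, let 0 < η_A < η_W < 1, and define ω(α) = φ(α) − (φ(0) + α·η_A·φ'(0)). Let (α_i)_{i≥0} be a strictly monotonically increasing real sequence with α_0 = 0, and suppose j ≥ 1 is the least index at which at least one of the following stage-one conditions holds: (a) α_j is a Wolfe step; (b) ω(α_j) ≥ ω(α_{j−1}); (c) ω'(α_j) ≥ 0 (i.e., none of (a),(b),(c) holds at any index i with 1 ≤ i < j). Then there exists a Wolfe step α* ∈ [α_{j−1}, α_j]. -/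
/-- **Stage one of a Wolfe line search** (Proposition 2.1).
If `j ≥ 1` is the least index at which one of the stage-one conditions
(a) `α j` is a Wolfe step, (b) `ω(α j) ≥ ω(α (j-1))`, (c) `ω'(α j) ≥ 0`
holds, then `[α (j-1), α j]` contains a Wolfe step. -/
theorem wolfe_stage_one (φ : ℝ → ℝ) (ηA ηW : ℝ)
    (hφ : ContDiff ℝ 1 φ) (hd0 : deriv φ 0 < 0)
    (hA : 0 < ηA) (hAW : ηA < ηW) (hW1 : ηW < 1)
    (WolfeStep : ℝ → Prop)
    (hWolfe : ∀ t, WolfeStep t ↔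
      0 < t ∧ φ t ≤ φ 0 + t * ηA * deriv φ 0 ∧ |deriv φ t| ≤ ηW * |deriv φ 0|)
    (ω : ℝ → ℝ) (hω : ω = fun t => φ t - (φ 0 + t * ηA * deriv φ 0))
    (α : ℕ → ℝ) (hmono : StrictMono α) (h0 : α 0 = 0)
    (j : ℕ) (hj1 : 1 ≤ j)
    (stageOne : ℕ → Prop)
    (hstage : ∀ i, stageOne i ↔
      (WolfeStep (α i) ∨ ω (α (i - 1)) ≤ ω (α i) ∨ 0 ≤ deriv ω (α i)))
    (hj : stageOne j)
    (hleast : ∀ i, 1 ≤ i → i < j → ¬ stageOne i) :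
    ∃ t ∈ Set.Icc (α (j - 1)) (α j), WolfeStep t := by
  have hφd : Differentiable ℝ φ := hφ.differentiable one_ne_zero
  -- derivative of ω
  have hder : ∀ t : ℝ, HasDerivAt ω (deriv φ t - ηA * deriv φ 0) t := by
    intro t
    rw [hω]
    have h1 : HasDerivAt (fun t : ℝ => φ 0 + t * ηA * deriv φ 0)
        (ηA * deriv φ 0) t := by
      have := (((hasDerivAt_id t).mul_const ηA).mul_const (deriv φ 0)).const_add (φ 0)
      simpa using this
    exact (hφd t).hasDerivAt.sub h1
  have hderiv : ∀ t : ℝ, deriv ω t = deriv φ t - ηA * deriv φ 0 :=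
    fun t => (hder t).deriv
  have hωcont : Continuous ω := by
    rw [hω]
    exact hφ.continuous.sub (continuous_const.add
      ((continuous_id.mul continuous_const).mul continuous_const))
  set a := α (j - 1) with ha_def
  set b := α j with hb_def
  have hab : a < b := hmono (by omega)
  have ha0 : 0 ≤ a := by
    rw [ha_def, ← h0]
    exact hmono.monotone (Nat.zero_le _)
  -- ω (α i) ≤ 0 for i < j
  have hneg : ∀ i, i < j → ω (α i) ≤ 0 := by
    intro i
    induction i with
    | zero =>
      intro _
      rw [h0, hω]; simp
    | succ n ih =>
      intro h
      have hns := hleast (n + 1) (by omega) h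
      rw [hstage] at hns
      push_neg at hns
      obtain ⟨_, h2, _⟩ := hns
      simp only [Nat.add_sub_cancel] at h2
      have := ih (by omega)
      linarith
  have hωa : ω a ≤ 0 := hneg (j - 1) (by omega)
  -- deriv ω a < 0
  have hω'a : deriv ω a < 0 := by
    rcases Nat.lt_or_ge j 2 with hj2 | hj2
    · have hje : j = 1 := by omega
      rw [ha_def, hje]
      simp only [Nat.sub_self, h0, hderiv]
      nlinarith
    · have hns := hleast (j - 1) (by omega) (by omega)
      rw [hstage] at hns
      push_neg at hns
      exact hns.2.2
  rw [hstage] at hj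
  rcases hj with hWj | hcond
  · exact ⟨b, ⟨le_of_lt hab, le_rfl⟩, hWj⟩
  -- minimizer of ω on [a, b]
  obtain ⟨c, hcI, hmin⟩ := isCompact_Icc.exists_isMinOn (Set.nonempty_Icc.2 hab.le)
    (hωcont.continuousOn (s := Set.Icc a b))
  -- there is a point t ∈ (a, b) with ω t < ω a
  have hlt : ∃ t, a < t ∧ t < b ∧ ω t < ω a := by
    have hslope : Filter.Tendsto (slope ω a) (nhdsWithin a {a}ᶜ) (nhds (deriv ω a)) := by
      have := (hder a)
      rw [hasDerivAt_iff_tendsto_slope] at this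
      rw [hderiv]; exact this
    have hev : ∀ᶠ t in nhdsWithin a {a}ᶜ, slope ω a t < 0 :=
      hslope.eventually (Filter.Tendsto.eventually_lt_const hω'a Filter.tendsto_id)
    have hev' : ∀ᶠ t in nhdsWithin a (Set.Ioi a), slope ω a t < 0 :=
      hev.filter_mono (nhdsWithin_mono a (fun t ht => ne_of_gt ht))
    have hev2 : ∀ᶠ t in nhdsWithin a (Set.Ioi a), t < b :=
      eventually_nhdsWithin_of_eventually_nhds (Filter.Tendsto.eventually_lt_const hab Filter.tendsto_id)
    obtain ⟨t, ht1, ht2⟩ := ((hev'.and hev2).and self_mem_nhdsWithin).exists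
    refine ⟨t, ht2, ht1.2, ?_⟩
    have hta : a < t := ht2
    have hsl : slope ω a t < 0 := ht1.1
    rw [slope_def_field] at hsl
    have htpos : 0 < t - a := by linarith
    by_contra hge
    push_neg at hge
    exact absurd hsl (not_lt.mpr (div_nonneg (by linarith) htpos.le))
  obtain ⟨t, hat, htb, hωt⟩ := hlt
  have htI : t ∈ Set.Icc a b := ⟨hat.le, htb.le⟩
  -- c ≠ a
  have hac : a < c := by
    rcases lt_or_eq_of_le hcI.1 with h | h
    · exact h
    · exfalso
      have h1 : ω c ≤ ω t := hmin htI
      rw [← h] at h1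
      linarith
  have hωc : ω c ≤ 0 := le_trans (hmin ⟨le_refl a, hab.le⟩) hωa
  -- deriv ω c = 0
  have hω'c : deriv ω c = 0 := by
    rcases lt_or_eq_of_le hcI.2 with hcb | hcb
    · have hloc : IsLocalMin ω c :=
        hmin.isLocalMin (Icc_mem_nhds hac hcb)
      exact hloc.deriv_eq_zero
    · -- c = b
      rcases hcond with hb | hc
      · exfalso
        have h1 : ω c ≤ ω t := hmin htI
        rw [hcb] at h1
        rw [← ha_def, ← hb_def] at hb
        linarith
      · -- case (c): deriv ω b ≥ 0; show also ≤ 0 since b is a minimum from the left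
        have hle : deriv ω c ≤ 0 := by
          have hslope : Filter.Tendsto (slope ω c) (nhdsWithin c {c}ᶜ)
              (nhds (deriv ω c)) := by
            have := hder c
            rw [hasDerivAt_iff_tendsto_slope] at this
            rw [hderiv]; exact this
          have hslope' : Filter.Tendsto (slope ω c) (nhdsWithin c (Set.Ioo a c))
              (nhds (deriv ω c)) :=
            hslope.mono_left (nhdsWithin_mono c (fun x hx => ne_of_lt hx.2))
          have hne : (nhdsWithin c (Set.Ioo a c)).NeBot := by
            rw [hcb]
            exact right_nhdsWithin_Ioo_neBot (by rw [← hcb]; exact hac)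
          refine le_of_tendsto hslope' ?_
          filter_upwards [self_mem_nhdsWithin] with x hx
          have hxc : x < c := hx.2
          have hx1 : ω c ≤ ω x := hmin ⟨hx.1.le, hcb ▸ hx.2.le⟩
          have : x - c < 0 := by linarith
          rw [slope_def_field]
          exact div_nonpos_of_nonneg_of_nonpos (by linarith) (by linarith)
        rw [← hb_def] at hc
        rw [hcb] at hle ⊢
        exact le_antisymm hle hc
  -- c is a Wolfe step
  refine ⟨c, hcI, ?_⟩
  rw [hWolfe]
  refine ⟨lt_of_le_of_lt ha0 hac, ?_, ?_⟩
  · rw [hω] at hωc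
    simp only at hωc
    linarith
  · have hdc : deriv φ c = ηA * deriv φ 0 := by
      have := hderiv c
      rw [hω'c] at this
      linarith
    rw [hdc, abs_of_neg hd0, abs_of_neg (by nlinarith : ηA * deriv φ 0 < 0)]
    nlinarith
end

section
/- Let φ : ℝ → ℝ be continuously differentiable with φ'(0) < 0, let 0 < η_A < η_W < 1, and define ω(α) = φ(α) − (φ(0) + α·η_A·φ'(0)). Suppose α_low, α_high ≥ 0 are distinct points such that (a) ω(α_low) ≤ 0; (b) ω(α_low) ≤ ω(α_high); and (c) ω'(α_low)·(α_high − α_low) < 0. Then there exists a Wolfe step α* in the closed interval with endpoints α_low and α_high. -/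
/-- **Stage two of a Wolfe line search** (Proposition 2.2).
If `ω(α_low) ≤ 0`, `ω(α_low) ≤ ω(α_high)` and `ω'(α_low)·(α_high − α_low) < 0`,
then the closed interval with endpoints `α_low` and `α_high` contains a Wolfe step. -/
theorem wolfe_stage_two (φ : ℝ → ℝ) (ηA ηW : ℝ)
    (hφ : ContDiff ℝ 1 φ) (hd0 : deriv φ 0 < 0)
    (hA : 0 < ηA) (hAW : ηA < ηW) (hW1 : ηW < 1)
    (WolfeStep : ℝ → Prop)
    (hWolfe : ∀ t, WolfeStep t ↔
      0 < t ∧ φ t ≤ φ 0 + t * ηA * deriv φ 0 ∧ |deriv φ t| ≤ ηW * |deriv φ 0|)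
    (ω : ℝ → ℝ) (hω : ω = fun t => φ t - (φ 0 + t * ηA * deriv φ 0))
    (αlo αhi : ℝ) (hlo : 0 ≤ αlo) (hhi : 0 ≤ αhi) (hne : αlo ≠ αhi)
    (ha : ω αlo ≤ 0) (hb : ω αlo ≤ ω αhi)
    (hc : deriv ω αlo * (αhi - αlo) < 0) :
    ∃ t ∈ Set.uIcc αlo αhi, WolfeStep t := by
  set d0 := deriv φ 0 with hd0def
  have hφdiff : Differentiable ℝ φ := hφ.differentiable one_ne_zero
  -- ω has derivative deriv φ t - ηA * d0 at every t
  have hωd : ∀ t : ℝ, HasDerivAt ω (deriv φ t - ηA * d0) t := by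
    intro t
    rw [hω]
    have h1 : HasDerivAt φ (deriv φ t) t := (hφdiff t).hasDerivAt
    have h2 : HasDerivAt (fun s : ℝ => φ 0 + s * ηA * d0) (ηA * d0) t := by
      have : HasDerivAt (fun s : ℝ => s * ηA * d0) (ηA * d0) t := by
        have := ((hasDerivAt_id t).mul_const ηA).mul_const d0
        simpa using this
      simpa using (this.const_add (φ 0))
    exact h1.sub h2
  have hωdiffble : Differentiable ℝ ω := fun t => (hωd t).differentiableAt
  have hωcont : Continuous ω := hωdiffble.continuous
  have hderivω : ∀ t, deriv ω t = deriv φ t - ηA * d0 := fun t => (hωd t).deriv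
  set I := Set.uIcc αlo αhi with hI
  have hIc : IsCompact I := isCompact_uIcc
  obtain ⟨tst, htI, htmin⟩ := hIc.exists_isMinOn ⟨αlo, Set.left_mem_uIcc⟩
    (hωcont.continuousOn)
  -- find y ∈ I with ω y < ω αlo
  have hslope : Filter.Tendsto (slope ω αlo) (nhdsWithin αlo {αlo}ᶜ)
      (nhds (deriv ω αlo)) := by
    have := (hωd αlo)
    rw [hasDerivAt_iff_tendsto_slope] at this
    simpa [hderivω] using this
  obtain ⟨y, hyI, hylt⟩ : ∃ y ∈ I, ω y < ω αlo := by
    rcases lt_or_gt_of_ne hne with hlt | hgt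
    · -- αlo < αhi : deriv ω αlo < 0
      have hcneg : deriv ω αlo < 0 := by nlinarith [sub_pos.mpr hlt]
      have hev : ∀ᶠ y in nhdsWithin αlo (Set.Ioi αlo), slope ω αlo y < 0 :=
        (hslope.mono_left (nhdsWithin_mono _ (by
          intro x hx
          simpa using ne_of_gt hx))).eventually_lt_const hcneg
      have hmem : Set.Ioo αlo αhi ∈ nhdsWithin αlo (Set.Ioi αlo) :=
        Ioo_mem_nhdsGT_of_mem ⟨le_rfl, hlt⟩
      obtain ⟨y, hy1, hy2⟩ := (hev.and (Filter.eventually_of_mem hmem (fun x hx => hx))).exists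
      refine ⟨y, Set.Icc_subset_uIcc (Set.Ioo_subset_Icc_self hy2), ?_⟩
      have hypos : 0 < y - αlo := sub_pos.mpr hy2.1
      rw [slope_def_field] at hy1
      have := (div_lt_iff₀ hypos).mp hy1
      linarith
    · -- αhi < αlo : deriv ω αlo > 0
      have hcpos : 0 < deriv ω αlo := by nlinarith [sub_neg.mpr hgt]
      have hev : ∀ᶠ y in nhdsWithin αlo (Set.Iio αlo), 0 < slope ω αlo y :=
        (hslope.mono_left (nhdsWithin_mono _ (by
          intro x hx
          simpa using ne_of_lt hx))).eventually_const_lt hcpos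
      have hmem : Set.Ioo αhi αlo ∈ nhdsWithin αlo (Set.Iio αlo) :=
        Ioo_mem_nhdsLT_of_mem ⟨hgt, le_rfl⟩
      obtain ⟨y, hy1, hy2⟩ := (hev.and (Filter.eventually_of_mem hmem (fun x hx => hx))).exists
      refine ⟨y, ?_, ?_⟩
      · show y ∈ Set.uIcc αlo αhi
        rw [Set.uIcc_comm]
        exact Set.Icc_subset_uIcc (Set.Ioo_subset_Icc_self hy2)
      · have hyneg : y - αlo < 0 := sub_neg.mpr hy2.2
        rw [slope_def_field] at hy1
        have := (lt_div_iff_of_neg hyneg).mp hy1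
        linarith
  have hmlt : ω tst < ω αlo := lt_of_le_of_lt (htmin hyI) hylt
  have htne_lo : tst ≠ αlo := fun h => absurd hmlt (by rw [h]; exact lt_irrefl _)
  have htne_hi : tst ≠ αhi := fun h => by
    rw [h] at hmlt; exact absurd (lt_of_lt_of_le hmlt hb) (lt_irrefl _)
  -- tst is interior
  have htIoo : tst ∈ Set.Ioo (min αlo αhi) (max αlo αhi) := by
    rw [hI, Set.uIcc] at htI
    rcases htI with ⟨h1, h2⟩
    constructor
    · rcases lt_or_eq_of_le h1 with h | h
      · exact h
      · exfalso
        rcases min_cases αlo αhi with ⟨hm, _⟩ | ⟨hm, _⟩ <;> rw [hm] at h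
        · exact htne_lo h.symm
        · exact htne_hi h.symm
    · rcases lt_or_eq_of_le h2 with h | h
      · exact h
      · exfalso
        rcases max_cases αlo αhi with ⟨hm, _⟩ | ⟨hm, _⟩ <;> rw [hm] at h
        · exact htne_lo h
        · exact htne_hi h
  have hInhds : I ∈ nhds tst := by
    rw [hI, Set.uIcc]
    exact Filter.mem_of_superset (Ioo_mem_nhds htIoo.1 htIoo.2) Set.Ioo_subset_Icc_self
  have hlocmin : IsLocalMin ω tst := htmin.isLocalMin hInhds
  have hderiv0 : deriv φ tst - ηA * d0 = 0 := hlocmin.hasDerivAt_eq_zero (hωd tst)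
  have htpos : 0 < tst := lt_of_le_of_lt (le_min hlo hhi) htIoo.1
  refine ⟨tst, htI, (hWolfe tst).mpr ⟨htpos, ?_, ?_⟩⟩
  · have : ω tst ≤ 0 := le_of_lt (lt_of_lt_of_le hmlt ha)
    rw [hω] at this
    simpa using this
  · have h1 : deriv φ tst = ηA * d0 := by linarith
    rw [h1, abs_mul, abs_of_pos hA]
    have : 0 < |d0| := abs_pos.mpr (ne_of_lt hd0)
    nlinarith
end

section
/- Let 0 ≤ a < b and let θ : ℝ → ℝ be admissible on [a,b], with one-sided derivative limits θ'₊ and θ'₋. If θ'₊(a) < 0 and θ'₋(b) > 0, then there exists x ∈ (a,b) such that θ'₋(x) ≤ 0 ≤ θ'₊(x). -/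
/-- `θ` is admissible on `[a,b]` with one-sided derivative limits `Dp` (right) and
`Dm` (left): it is continuous on `[a,b]`, continuously differentiable off a finite
set `S ⊂ (a,b)`, and its derivative has one-sided limits `Dp x`/`Dm x` everywhere. -/
structure AdmissibleOn (θ : ℝ → ℝ) (a b : ℝ) (Dp Dm : ℝ → ℝ) : Prop where
  cont : ContinuousOn θ (Set.Icc a b)
  finite_except : ∃ S : Finset ℝ, (↑S : Set ℝ) ⊆ Set.Ioo a b ∧
    (∀ x ∈ Set.Icc a b \ ↑S, DifferentiableWithinAt ℝ θ (Set.Icc a b) x) ∧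
    ContinuousOn (derivWithin θ (Set.Icc a b)) (Set.Icc a b \ ↑S)
  tendsto_right : ∀ x ∈ Set.Ico a b,
    Filter.Tendsto (derivWithin θ (Set.Icc a b)) (nhdsWithin x (Set.Ioi x)) (nhds (Dp x))
  tendsto_left : ∀ x ∈ Set.Ioc a b,
    Filter.Tendsto (derivWithin θ (Set.Icc a b)) (nhdsWithin x (Set.Iio x)) (nhds (Dm x))

/-- `α` is a quasi-Wolfe step for `ψ` with one-sided derivatives `Dp`, `Dm`. -/
def QuasiWolfeAbs (ψ Dp Dm : ℝ → ℝ) (ηA ηW α : ℝ) : Prop :=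
  0 < α ∧ ψ α ≤ ψ 0 + α * ηA * Dp 0 ∧
    (|Dm α| ≤ ηW * |Dp 0| ∨ |Dp α| ≤ ηW * |Dp 0| ∨
      (Dm α ≠ Dp α ∧ Dm α ≤ 0 ∧ 0 ≤ Dp α))

open Set Filter Topology

private lemma kink_anti (θ : ℝ → ℝ) (a b c d : ℝ) (S : Finset ℝ)
    (hcont : ContinuousOn θ (Set.Icc a b))
    (hdiff : ∀ x ∈ Set.Icc a b \ ↑S, DifferentiableWithinAt ℝ θ (Set.Icc a b) x)
    (hsub : Set.Icc c d ⊆ Set.Icc a b)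
    (hIoo : Set.Ioo c d ⊆ Set.Ioo a b)
    (hfree : ∀ x ∈ Set.Ioo c d, x ∉ (S : Set ℝ))
    (hneg : ∀ x ∈ Set.Ioo c d, derivWithin θ (Set.Icc a b) x < 0) :
    StrictAntiOn θ (Set.Icc c d) := by
  apply strictAntiOn_of_deriv_neg (convex_Icc c d) (hcont.mono hsub)
  intro x hx
  rw [interior_Icc] at hx
  have hmem : Set.Icc a b ∈ 𝓝 x := Icc_mem_nhds (hIoo hx).1 (hIoo hx).2
  have := hneg x hx
  rwa [derivWithin_of_mem_nhds hmem] at this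

private lemma kink_mono (θ : ℝ → ℝ) (a b c d : ℝ) (S : Finset ℝ)
    (hcont : ContinuousOn θ (Set.Icc a b))
    (hdiff : ∀ x ∈ Set.Icc a b \ ↑S, DifferentiableWithinAt ℝ θ (Set.Icc a b) x)
    (hsub : Set.Icc c d ⊆ Set.Icc a b)
    (hIoo : Set.Ioo c d ⊆ Set.Ioo a b)
    (hfree : ∀ x ∈ Set.Ioo c d, x ∉ (S : Set ℝ))
    (hpos : ∀ x ∈ Set.Ioo c d, 0 < derivWithin θ (Set.Icc a b) x) :
    StrictMonoOn θ (Set.Icc c d) := by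
  apply strictMonoOn_of_deriv_pos (convex_Icc c d) (hcont.mono hsub)
  intro x hx
  rw [interior_Icc] at hx
  have hmem : Set.Icc a b ∈ 𝓝 x := Icc_mem_nhds (hIoo hx).1 (hIoo hx).2
  have := hpos x hx
  rwa [derivWithin_of_mem_nhds hmem] at this


/-- **Lemma 3.2 (b)**: if `θ` is admissible on `[a,b]` with `θ'₊(a) < 0` and
`θ'₋(b) > 0`, then there is an `x ∈ (a,b)` with `θ'₋(x) ≤ 0 ≤ θ'₊(x)`. -/
theorem admissible_kink_of_slopes (a b : ℝ) (θ Dp Dm : ℝ → ℝ)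
    (ha : 0 ≤ a) (hab : a < b)
    (hadm : AdmissibleOn θ a b Dp Dm)
    (h1 : Dp a < 0) (h2 : 0 < Dm b) :
    ∃ x ∈ Set.Ioo a b, Dm x ≤ 0 ∧ 0 ≤ Dp x := by
  obtain ⟨S, hSsub, hdiff, _⟩ := hadm.finite_except
  have hScl : IsClosed (S : Set ℝ) := (S.finite_toSet).isClosed
  have hcont := hadm.cont
  -- minimizer
  obtain ⟨x₀, hx₀mem, hx₀min⟩ :=
    (isCompact_Icc).exists_isMinOn (nonempty_Icc.2 hab.le) hcont
  -- generic eventual package near a point from the right with negative limit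
  have key_right : ∀ x ∈ Set.Ico a b, Dp x < 0 → ∃ d, x < d ∧ θ d < θ x ∧ d ∈ Set.Icc a b := by
    intro x hx hneg
    have e1 : ∀ᶠ y in 𝓝[>] x, derivWithin θ (Set.Icc a b) y < 0 :=
      (hadm.tendsto_right x hx).eventually_lt_const hneg
    have e2 : ∀ᶠ y in 𝓝[>] x, y ∉ (S : Set ℝ) := by
      by_cases hxS : x ∈ (S : Set ℝ)
      · -- x ∈ S ⊂ Ioo a b; still eventually not in S since S finite: use that S \ {x} is closed
        have hcl : IsClosed ((S : Set ℝ) \ {x}) := ((S.finite_toSet.subset diff_subset).isClosed)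
        have : ((S : Set ℝ) \ {x})ᶜ ∈ 𝓝 x := hcl.isOpen_compl.mem_nhds (by simp)
        filter_upwards [nhdsWithin_le_nhds this, self_mem_nhdsWithin] with y hy hy'
        intro hyS
        exact hy ⟨hyS, ne_of_gt hy'⟩
      · filter_upwards [nhdsWithin_le_nhds (hScl.isOpen_compl.mem_nhds hxS)] with y hy using hy
    have e3 : ∀ᶠ y in 𝓝[>] x, y < b := nhdsWithin_le_nhds (Iio_mem_nhds hx.2)
    have := (e1.and (e2.and e3)).and self_mem_nhdsWithin
    rw [Filter.eventually_iff, mem_nhdsGT_iff_exists_Ioo_subset] at this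
    obtain ⟨u, hu, hsub'⟩ := this
    set d := min u ((x + b) / 2) with hd
    have hxd : x < d := lt_min hu (by linarith [hx.2])
    have hdb : d < b := lt_of_le_of_lt (min_le_right _ _) (by linarith [hx.2])
    have hIood : Set.Ioo x d ⊆ Set.Ioo x u := Ioo_subset_Ioo le_rfl (min_le_left _ _)
    have hanti : StrictAntiOn θ (Set.Icc x d) := by
      apply kink_anti θ a b x d S hcont hdiff
      · exact Icc_subset_Icc hx.1 hdb.le
      · exact fun y hy => ⟨lt_of_le_of_lt hx.1 hy.1, lt_trans hy.2 hdb⟩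
      · exact fun y hy => ((hsub' (hIood hy)).1.2.1)
      · exact fun y hy => ((hsub' (hIood hy)).1.1)
    refine ⟨d, hxd, hanti (left_mem_Icc.2 hxd.le) (right_mem_Icc.2 hxd.le) hxd,
      ⟨le_trans hx.1 hxd.le, hdb.le⟩⟩
  have key_left : ∀ x ∈ Set.Ioc a b, 0 < Dm x → ∃ d, d < x ∧ θ d < θ x ∧ d ∈ Set.Icc a b := by
    intro x hx hpos
    have e1 : ∀ᶠ y in 𝓝[<] x, 0 < derivWithin θ (Set.Icc a b) y :=
      (hadm.tendsto_left x hx).eventually_const_lt hpos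
    have e2 : ∀ᶠ y in 𝓝[<] x, y ∉ (S : Set ℝ) := by
      by_cases hxS : x ∈ (S : Set ℝ)
      · have hcl : IsClosed ((S : Set ℝ) \ {x}) := ((S.finite_toSet.subset diff_subset).isClosed)
        have : ((S : Set ℝ) \ {x})ᶜ ∈ 𝓝 x := hcl.isOpen_compl.mem_nhds (by simp)
        filter_upwards [nhdsWithin_le_nhds this, self_mem_nhdsWithin] with y hy hy'
        intro hyS
        exact hy ⟨hyS, ne_of_lt hy'⟩
      · filter_upwards [nhdsWithin_le_nhds (hScl.isOpen_compl.mem_nhds hxS)] with y hy using hy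
    have e3 : ∀ᶠ y in 𝓝[<] x, a < y := nhdsWithin_le_nhds (Ioi_mem_nhds hx.1)
    have := (e1.and (e2.and e3)).and self_mem_nhdsWithin
    rw [Filter.eventually_iff, mem_nhdsLT_iff_exists_Ioo_subset] at this
    obtain ⟨u, hu, hsub'⟩ := this
    set d := max u ((a + x) / 2) with hd
    have hxd : d < x := max_lt hu (by linarith [hx.1])
    have had : a < d := lt_of_lt_of_le (by linarith [hx.1]) (le_max_right _ _)
    have hIood : Set.Ioo d x ⊆ Set.Ioo u x := Ioo_subset_Ioo (le_max_left _ _) le_rfl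
    have hmono : StrictMonoOn θ (Set.Icc d x) := by
      apply kink_mono θ a b d x S hcont hdiff
      · exact Icc_subset_Icc had.le hx.2
      · exact fun y hy => ⟨lt_trans had hy.1, lt_of_lt_of_le hy.2 hx.2⟩
      · exact fun y hy => ((hsub' (hIood hy)).1.2.1)
      · exact fun y hy => ((hsub' (hIood hy)).1.1)
    refine ⟨d, hxd, hmono (left_mem_Icc.2 hxd.le) (right_mem_Icc.2 hxd.le) hxd,
      ⟨had.le, le_trans hxd.le hx.2⟩⟩
  -- x₀ is not a
  have hxa : x₀ ≠ a := by
    rintro rfl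
    obtain ⟨d, _, hlt, hdmem⟩ := key_right x₀ ⟨le_rfl, hab⟩ h1
    exact absurd (hx₀min hdmem) (not_le.2 hlt)
  have hxb : x₀ ≠ b := by
    rintro rfl
    obtain ⟨d, _, hlt, hdmem⟩ := key_left x₀ ⟨hab, le_rfl⟩ h2
    exact absurd (hx₀min hdmem) (not_le.2 hlt)
  have hx₀ : x₀ ∈ Set.Ioo a b :=
    ⟨lt_of_le_of_ne hx₀mem.1 (Ne.symm hxa), lt_of_le_of_ne hx₀mem.2 hxb⟩
  refine ⟨x₀, hx₀, ?_, ?_⟩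
  · by_contra h
    push_neg at h
    obtain ⟨d, _, hlt, hdmem⟩ := key_left x₀ ⟨hx₀.1, hx₀.2.le⟩ h
    exact absurd (hx₀min hdmem) (not_le.2 hlt)
  · by_contra h
    push_neg at h
    obtain ⟨d, _, hlt, hdmem⟩ := key_right x₀ ⟨hx₀.1.le, hx₀.2⟩ h
    exact absurd (hx₀min hdmem) (not_le.2 hlt)
end

section
/- Let f : ℝⁿ → ℝ be continuously differentiable, let Ω be the box with projection proj_Ω, let x ∈ Ω be such that the level set {y ∈ Ω : f(y) ≤ f(x)} is bounded, and let p ∈ ℝⁿ satisfy ∇f(x)ᵀP_x(p) < 0. Fix constants 0 < η_A < η_W < 1 and set x(α) = proj_Ω(x + αp), ψ(α) = f(x(α)). Then either there exist 0 < α_L < α_U such that every α ∈ (α_L, α_U) is a quasi-Wolfe step, or there exists a quasi-Wolfe step satisfying condition (C4). -/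
open scoped Classical

noncomputable section

/-- Componentwise projection onto the box `[l, u]`. -/
def boxProj {n : ℕ} (l u : Fin n → ℝ) (x : Fin n → ℝ) : Fin n → ℝ :=
  fun i => if x i < l i then l i else if u i < x i then u i else x i

/-- The projected direction `P_y(p)` of `p` at `y`. -/
def projDir {n : ℕ} (l u : Fin n → ℝ) (y p : Fin n → ℝ) : Fin n → ℝ :=
  fun i => if (y i = l i ∧ p i < 0) ∨ (y i = u i ∧ 0 < p i) then 0 else p i

/-- The projected path `α ↦ proj_Ω(x + α p)`. -/
def boxPath {n : ℕ} (l u x p : Fin n → ℝ) (α : ℝ) : Fin n → ℝ :=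
  boxProj l u (fun i => x i + α * p i)

/-- `α` is a kink step with respect to index `i`. -/
def IsKink {n : ℕ} (l u x p : Fin n → ℝ) (α : ℝ) (i : Fin n) : Prop :=
  (x i + α * p i = l i ∧ p i < 0) ∨ (x i + α * p i = u i ∧ 0 < p i)

/-- The vector `P⁻_{x(α)}(p)`. -/
def projDirMinus {n : ℕ} (l u x p : Fin n → ℝ) (α : ℝ) : Fin n → ℝ :=
  fun i => if IsKink l u x p α i then p i else projDir l u (boxPath l u x p α) p i

/-- The right derivative `ψ'₊(α) = ∇f(x(α))ᵀ P_{x(α)}(p)`. -/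
def psiDp {n : ℕ} (f : (Fin n → ℝ) → ℝ) (l u x p : Fin n → ℝ) (α : ℝ) : ℝ :=
  fderiv ℝ f (boxPath l u x p α) (projDir l u (boxPath l u x p α) p)

/-- The left derivative `ψ'₋(α) = ∇f(x(α))ᵀ P⁻_{x(α)}(p)`. -/
def psiDm {n : ℕ} (f : (Fin n → ℝ) → ℝ) (l u x p : Fin n → ℝ) (α : ℝ) : ℝ :=
  fderiv ℝ f (boxPath l u x p α) (projDirMinus l u x p α)

/-- `α` is a quasi-Wolfe step for the path `α ↦ proj_Ω(x + α p)`. -/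
def QuasiWolfeStep {n : ℕ} (f : (Fin n → ℝ) → ℝ) (l u x p : Fin n → ℝ)
    (ηA ηW α : ℝ) : Prop :=
  0 < α ∧
  f (boxPath l u x p α) ≤ f (boxPath l u x p 0) + α * ηA * psiDp f l u x p 0 ∧
  (|psiDm f l u x p α| ≤ ηW * |psiDp f l u x p 0| ∨
   |psiDp f l u x p α| ≤ ηW * |psiDp f l u x p 0| ∨
   (psiDm f l u x p α ≠ psiDp f l u x p α ∧
     psiDm f l u x p α ≤ 0 ∧ 0 ≤ psiDp f l u x p α))

/-- The `i`-th component of the gradient of `f` at `y`. -/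
def gradComp {n : ℕ} (f : (Fin n → ℝ) → ℝ) (y : Fin n → ℝ) (i : Fin n) : ℝ :=
  fderiv ℝ f y (Pi.single i 1)

/-- Membership of `i` in the working set at `y` with parameter `ε`. -/
def InWS {n : ℕ} (f : (Fin n → ℝ) → ℝ) (l u y : Fin n → ℝ) (ε : ℝ) (i : Fin n) : Prop :=
  (y i ≤ l i + ε ∧ 0 < gradComp f y i) ∨ (u i - ε ≤ y i ∧ gradComp f y i < 0)

/-- The norm `‖Πᵀ∇f(y)‖` of the gradient projected off the working set. -/
def projGradNorm {n : ℕ} (f : (Fin n → ℝ) → ℝ) (l u y : Fin n → ℝ) (ε : ℝ) : ℝ :=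
  Real.sqrt (∑ i, (if InWS f l u y ε i then 0 else gradComp f y i) ^ 2)

/-- Euclidean norm on `Fin n → ℝ`. -/
def euclNorm {n : ℕ} (v : Fin n → ℝ) : ℝ :=
  Real.sqrt (∑ i, v i ^ 2)

end


section Aux

open Set Filter Topology

variable {n : ℕ} {l u x p : Fin n → ℝ}

lemma boxProj_eq_clamp (hlu : ∀ i, l i ≤ u i) (y : Fin n → ℝ) (i : Fin n) :
    boxProj l u y i = min (u i) (max (l i) (y i)) := by
  simp only [boxProj]
  split_ifs with h1 h2
  · rw [max_eq_left h1.le, min_eq_right (hlu i)]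
  · rw [max_eq_right (not_lt.1 h1), min_eq_left h2.le]
  · rw [max_eq_right (not_lt.1 h1), min_eq_right (not_lt.1 h2)]

lemma boxPath_apply (hlu : ∀ i, l i ≤ u i) (t : ℝ) (i : Fin n) :
    boxPath l u x p t i = min (u i) (max (l i) (x i + t * p i)) :=
  boxProj_eq_clamp hlu _ i

lemma continuous_boxPath (hlu : ∀ i, l i ≤ u i) : Continuous (boxPath l u x p) := by
  apply continuous_pi
  intro i
  have : (fun t => boxPath l u x p t i)
      = fun t => min (u i) (max (l i) (x i + t * p i)) :=
    funext fun t => boxPath_apply hlu t i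
  rw [this]
  fun_prop

lemma boxPath_zero (hx : ∀ i, l i ≤ x i ∧ x i ≤ u i) : boxPath l u x p 0 = x := by
  funext i
  simp only [boxPath, boxProj, zero_mul, add_zero]
  split_ifs with h1 h2
  · exact absurd h1 (not_lt.2 (hx i).1)
  · exact absurd h2 (not_lt.2 (hx i).2)
  · rfl

lemma boxPath_mem (hlu : ∀ i, l i ≤ u i) (t : ℝ) (i : Fin n) :
    l i ≤ boxPath l u x p t i ∧ boxPath l u x p t i ≤ u i := by
  rw [boxPath_apply hlu]
  exact ⟨le_min (hlu i) (le_max_left _ _), min_le_left _ _⟩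

lemma boxPath_eq_min (hlu : ∀ i, l i ≤ u i) (hx : ∀ i, l i ≤ x i ∧ x i ≤ u i)
    {t : ℝ} (ht : 0 ≤ t) {i : Fin n} (hp : 0 ≤ p i) :
    boxPath l u x p t i = min (u i) (x i + t * p i) := by
  rw [boxPath_apply hlu, max_eq_right]
  have : 0 ≤ t * p i := mul_nonneg ht hp
  linarith [(hx i).1]

lemma boxPath_eq_max (hlu : ∀ i, l i ≤ u i) (hx : ∀ i, l i ≤ x i ∧ x i ≤ u i)
    {t : ℝ} (ht : 0 ≤ t) {i : Fin n} (hp : p i ≤ 0) :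
    boxPath l u x p t i = max (l i) (x i + t * p i) := by
  rw [boxPath_apply hlu, min_eq_right]
  have : t * p i ≤ 0 := mul_nonpos_of_nonneg_of_nonpos ht hp
  exact max_le (hlu i) (by linarith [(hx i).2])

/-! ### Pointwise values of the projected direction -/

lemma projDir_val_lt (hlu : ∀ i, l i ≤ u i) (hx : ∀ i, l i ≤ x i ∧ x i ≤ u i)
    {t : ℝ} (ht : 0 ≤ t) {i : Fin n} (hp : 0 < p i) (h : x i + t * p i < u i) :
    projDir l u (boxPath l u x p t) p i = p i := by
  have hpa : boxPath l u x p t i = x i + t * p i := by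
    rw [boxPath_eq_min hlu hx ht hp.le, min_eq_right h.le]
  simp only [projDir]
  rw [if_neg]
  rintro (⟨-, h2⟩ | ⟨h1, -⟩)
  · exact absurd hp (not_lt.2 h2.le)
  · rw [hpa] at h1; exact absurd h1 (ne_of_lt h)

lemma projDir_val_ge (hlu : ∀ i, l i ≤ u i) (hx : ∀ i, l i ≤ x i ∧ x i ≤ u i)
    {t : ℝ} (ht : 0 ≤ t) {i : Fin n} (hp : 0 < p i) (h : u i ≤ x i + t * p i) :
    projDir l u (boxPath l u x p t) p i = 0 := by
  have hpa : boxPath l u x p t i = u i := by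
    rw [boxPath_eq_min hlu hx ht hp.le, min_eq_left h]
  simp only [projDir]
  rw [if_pos (Or.inr ⟨hpa, hp⟩)]

lemma projDir_val_gt' (hlu : ∀ i, l i ≤ u i) (hx : ∀ i, l i ≤ x i ∧ x i ≤ u i)
    {t : ℝ} (ht : 0 ≤ t) {i : Fin n} (hp : p i < 0) (h : l i < x i + t * p i) :
    projDir l u (boxPath l u x p t) p i = p i := by
  have hpa : boxPath l u x p t i = x i + t * p i := by
    rw [boxPath_eq_max hlu hx ht hp.le, max_eq_right h.le]
  simp only [projDir]
  rw [if_neg]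
  rintro (⟨h1, -⟩ | ⟨-, h2⟩)
  · rw [hpa] at h1; exact absurd h1 (ne_of_gt h)
  · exact absurd hp (not_lt.2 h2.le)

lemma projDir_val_le' (hlu : ∀ i, l i ≤ u i) (hx : ∀ i, l i ≤ x i ∧ x i ≤ u i)
    {t : ℝ} (ht : 0 ≤ t) {i : Fin n} (hp : p i < 0) (h : x i + t * p i ≤ l i) :
    projDir l u (boxPath l u x p t) p i = 0 := by
  have hpa : boxPath l u x p t i = l i := by
    rw [boxPath_eq_max hlu hx ht hp.le, max_eq_left h]
  simp only [projDir]
  rw [if_pos (Or.inl ⟨hpa, hp⟩)]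

lemma projDir_val_z {y : Fin n → ℝ} {i : Fin n} (hp : p i = 0) :
    projDir l u y p i = 0 := by
  simp only [projDir]
  split_ifs <;> simp [hp]

/-! ### One-sided derivative of the path -/

lemma hasDerivWithinAt_boxPath (hlu : ∀ i, l i ≤ u i) (hx : ∀ i, l i ≤ x i ∧ x i ≤ u i)
    {α : ℝ} (hα : 0 ≤ α) :
    HasDerivWithinAt (boxPath l u x p)
      (projDir l u (boxPath l u x p α) p) (Ici α) α := by
  rw [hasDerivWithinAt_pi]
  intro i
  rcases lt_trichotomy (p i) 0 with hp | hp | hp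
  · -- p i < 0
    have hmono : ∀ {s t : ℝ}, s ≤ t → x i + t * p i ≤ x i + s * p i := by
      intro s t hst
      nlinarith
    rcases lt_trichotomy (l i) (x i + α * p i) with hcl | hcl | hcl
    · rw [projDir_val_gt' hlu hx hα hp hcl]
      have hda : HasDerivAt (fun t : ℝ => x i + t * p i) (p i) α :=
        (hasDerivAt_mul_const (p i)).const_add (x i)
      apply hda.hasDerivWithinAt.congr_of_eventuallyEq
      · have hev : ∀ᶠ t in 𝓝 α, l i < x i + t * p i :=
          (Continuous.continuousAt (by fun_prop)).eventually_const_lt hcl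
        filter_upwards [hev.filter_mono nhdsWithin_le_nhds,
          eventually_mem_nhdsWithin] with t h1 (h2 : α ≤ t)
        rw [boxPath_eq_max hlu hx (hα.trans h2) hp.le, max_eq_right h1.le]
      · rw [boxPath_eq_max hlu hx hα hp.le, max_eq_right hcl.le]
    · rw [projDir_val_le' hlu hx hα hp hcl.ge]
      apply (hasDerivWithinAt_const α (Ici α) (l i)).congr
      · intro t (ht : α ≤ t)
        rw [boxPath_eq_max hlu hx (hα.trans ht) hp.le,
          max_eq_left ((hmono ht).trans hcl.ge)]
      · rw [boxPath_eq_max hlu hx hα hp.le, max_eq_left hcl.ge]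
    · rw [projDir_val_le' hlu hx hα hp hcl.le]
      apply (hasDerivWithinAt_const α (Ici α) (l i)).congr
      · intro t (ht : α ≤ t)
        rw [boxPath_eq_max hlu hx (hα.trans ht) hp.le,
          max_eq_left ((hmono ht).trans hcl.le)]
      · rw [boxPath_eq_max hlu hx hα hp.le, max_eq_left hcl.le]
  · -- p i = 0
    rw [projDir_val_z hp]
    apply (hasDerivWithinAt_const α (Ici α) (boxPath l u x p α i)).congr
    · intro t _
      simp only [boxPath, boxProj, hp, mul_zero, add_zero]
    · rfl
  · -- 0 < p i
    have hmono : ∀ {s t : ℝ}, s ≤ t → x i + s * p i ≤ x i + t * p i := by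
      intro s t hst
      nlinarith
    rcases lt_trichotomy (x i + α * p i) (u i) with hcu | hcu | hcu
    · rw [projDir_val_lt hlu hx hα hp hcu]
      have hda : HasDerivAt (fun t : ℝ => x i + t * p i) (p i) α :=
        (hasDerivAt_mul_const (p i)).const_add (x i)
      apply hda.hasDerivWithinAt.congr_of_eventuallyEq
      · have hev : ∀ᶠ t in 𝓝 α, x i + t * p i < u i :=
          (Continuous.continuousAt (by fun_prop)).eventually_lt_const hcu
        filter_upwards [hev.filter_mono nhdsWithin_le_nhds,
          eventually_mem_nhdsWithin] with t h1 (h2 : α ≤ t)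
        rw [boxPath_eq_min hlu hx (hα.trans h2) hp.le, min_eq_right h1.le]
      · rw [boxPath_eq_min hlu hx hα hp.le, min_eq_right hcu.le]
    · rw [projDir_val_ge hlu hx hα hp hcu.ge]
      apply (hasDerivWithinAt_const α (Ici α) (u i)).congr
      · intro t (ht : α ≤ t)
        rw [boxPath_eq_min hlu hx (hα.trans ht) hp.le,
          min_eq_left (hcu.ge.trans (hmono ht))]
      · rw [boxPath_eq_min hlu hx hα hp.le, min_eq_left hcu.ge]
    · rw [projDir_val_ge hlu hx hα hp hcu.le]
      apply (hasDerivWithinAt_const α (Ici α) (u i)).congr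
      · intro t (ht : α ≤ t)
        rw [boxPath_eq_min hlu hx (hα.trans ht) hp.le,
          min_eq_left (hcu.le.trans (hmono ht))]
      · rw [boxPath_eq_min hlu hx hα hp.le, min_eq_left hcu.le]

/-! ### Local constancy of the projected direction -/

lemma projDir_eventually_right (hlu : ∀ i, l i ≤ u i) (hx : ∀ i, l i ≤ x i ∧ x i ≤ u i)
    {α : ℝ} (hα : 0 ≤ α) :
    ∀ᶠ t in 𝓝[Ici α] α,
      projDir l u (boxPath l u x p t) p = projDir l u (boxPath l u x p α) p := by
  have h : ∀ i, ∀ᶠ t in 𝓝[Ici α] α,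
      projDir l u (boxPath l u x p t) p i = projDir l u (boxPath l u x p α) p i := by
    intro i
    rcases lt_trichotomy (p i) 0 with hp | hp | hp
    · rcases lt_or_ge (l i) (x i + α * p i) with hcl | hcl
      · have hev : ∀ᶠ t in 𝓝 α, l i < x i + t * p i :=
          (Continuous.continuousAt (by fun_prop)).eventually_const_lt hcl
        filter_upwards [hev.filter_mono nhdsWithin_le_nhds,
          eventually_mem_nhdsWithin] with t h1 (h2 : α ≤ t)
        rw [projDir_val_gt' hlu hx (hα.trans h2) hp h1, projDir_val_gt' hlu hx hα hp hcl]
      · filter_upwards [eventually_mem_nhdsWithin] with t (h2 : α ≤ t)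
        have : x i + t * p i ≤ l i := by nlinarith
        rw [projDir_val_le' hlu hx (hα.trans h2) hp this, projDir_val_le' hlu hx hα hp hcl]
    · filter_upwards with t
      rw [projDir_val_z hp, projDir_val_z hp]
    · rcases lt_or_ge (x i + α * p i) (u i) with hcu | hcu
      · have hev : ∀ᶠ t in 𝓝 α, x i + t * p i < u i :=
          (Continuous.continuousAt (by fun_prop)).eventually_lt_const hcu
        filter_upwards [hev.filter_mono nhdsWithin_le_nhds,
          eventually_mem_nhdsWithin] with t h1 (h2 : α ≤ t)
        rw [projDir_val_lt hlu hx (hα.trans h2) hp h1, projDir_val_lt hlu hx hα hp hcu]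
      · filter_upwards [eventually_mem_nhdsWithin] with t (h2 : α ≤ t)
        have : u i ≤ x i + t * p i := by nlinarith
        rw [projDir_val_ge hlu hx (hα.trans h2) hp this, projDir_val_ge hlu hx hα hp hcu]
  exact (Filter.eventually_all.2 h).mono fun t ht => funext ht

lemma projDir_eventually_left (hlu : ∀ i, l i ≤ u i) (hx : ∀ i, l i ≤ x i ∧ x i ≤ u i)
    {α : ℝ} (hα : 0 < α) :
    ∀ᶠ t in 𝓝[Iio α] α,
      projDir l u (boxPath l u x p t) p = projDirMinus l u x p α := by
  have hpos : ∀ᶠ t in 𝓝[Iio α] α, 0 < t :=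
    ((Continuous.continuousAt (continuous_id)).eventually_const_lt hα).filter_mono
      nhdsWithin_le_nhds
  have h : ∀ i, ∀ᶠ t in 𝓝[Iio α] α,
      projDir l u (boxPath l u x p t) p i = projDirMinus l u x p α i := by
    intro i
    rcases lt_trichotomy (p i) 0 with hp | hp | hp
    · rcases lt_trichotomy (l i) (x i + α * p i) with hcl | hcl | hcl
      · have hmv : projDirMinus l u x p α i = p i := by
          simp only [projDirMinus]
          rw [if_neg, projDir_val_gt' hlu hx hα.le hp hcl]
          rintro (⟨h1, -⟩ | ⟨-, h2⟩)
          · exact absurd h1 (ne_of_gt hcl)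
          · exact absurd hp (not_lt.2 h2.le)
        have hev : ∀ᶠ t in 𝓝 α, l i < x i + t * p i :=
          (Continuous.continuousAt (by fun_prop)).eventually_const_lt hcl
        filter_upwards [hev.filter_mono nhdsWithin_le_nhds, hpos] with t h1 h2
        rw [projDir_val_gt' hlu hx h2.le hp h1, hmv]
      · have hmv : projDirMinus l u x p α i = p i := by
          simp only [projDirMinus]
          rw [if_pos (show IsKink l u x p α i from Or.inl ⟨hcl.symm, hp⟩)]
        filter_upwards [eventually_mem_nhdsWithin, hpos] with t (h1 : t < α) h2
        have : l i < x i + t * p i := by nlinarith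
        rw [projDir_val_gt' hlu hx h2.le hp this, hmv]
      · have hmv : projDirMinus l u x p α i = 0 := by
          simp only [projDirMinus]
          rw [if_neg, projDir_val_le' hlu hx hα.le hp hcl.le]
          rintro (⟨h1, -⟩ | ⟨-, h2⟩)
          · exact absurd h1 (ne_of_lt hcl)
          · exact absurd hp (not_lt.2 h2.le)
        have hev : ∀ᶠ t in 𝓝 α, x i + t * p i < l i :=
          (Continuous.continuousAt (by fun_prop)).eventually_lt_const hcl
        filter_upwards [hev.filter_mono nhdsWithin_le_nhds, hpos] with t h1 h2
        rw [projDir_val_le' hlu hx h2.le hp h1.le, hmv]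
    · filter_upwards with t
      rw [projDir_val_z hp]
      simp only [projDirMinus]
      split_ifs with hk
      · rcases hk with ⟨-, h2⟩ | ⟨-, h2⟩ <;> simp [hp] at h2
      · rw [projDir_val_z hp]
    · rcases lt_trichotomy (x i + α * p i) (u i) with hcu | hcu | hcu
      · have hmv : projDirMinus l u x p α i = p i := by
          simp only [projDirMinus]
          rw [if_neg, projDir_val_lt hlu hx hα.le hp hcu]
          rintro (⟨-, h2⟩ | ⟨h1, -⟩)
          · exact absurd hp (not_lt.2 h2.le)
          · exact absurd h1 (ne_of_lt hcu)
        have hev : ∀ᶠ t in 𝓝 α, x i + t * p i < u i :=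
          (Continuous.continuousAt (by fun_prop)).eventually_lt_const hcu
        filter_upwards [hev.filter_mono nhdsWithin_le_nhds, hpos] with t h1 h2
        rw [projDir_val_lt hlu hx h2.le hp h1, hmv]
      · have hmv : projDirMinus l u x p α i = p i := by
          simp only [projDirMinus]
          rw [if_pos (show IsKink l u x p α i from Or.inr ⟨hcu, hp⟩)]
        filter_upwards [eventually_mem_nhdsWithin, hpos] with t (h1 : t < α) h2
        have : x i + t * p i < u i := by nlinarith
        rw [projDir_val_lt hlu hx h2.le hp this, hmv]
      · have hmv : projDirMinus l u x p α i = 0 := by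
          simp only [projDirMinus]
          rw [if_neg, projDir_val_ge hlu hx hα.le hp hcu.le]
          rintro (⟨-, h2⟩ | ⟨h1, -⟩)
          · exact absurd hp (not_lt.2 h2.le)
          · exact absurd h1 (ne_of_gt hcu)
        have hev : ∀ᶠ t in 𝓝 α, u i < x i + t * p i :=
          (Continuous.continuousAt (by fun_prop)).eventually_const_lt hcu
        filter_upwards [hev.filter_mono nhdsWithin_le_nhds, hpos] with t h1 h2
        rw [projDir_val_ge hlu hx h2.le hp h1.le, hmv]
  exact (Filter.eventually_all.2 h).mono fun t ht => funext ht

variable {f : (Fin n → ℝ) → ℝ}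

lemma hasDerivWithinAt_psi (hf : ContDiff ℝ 1 f) (hlu : ∀ i, l i ≤ u i)
    (hx : ∀ i, l i ≤ x i ∧ x i ≤ u i) {α : ℝ} (hα : 0 ≤ α) :
    HasDerivWithinAt (fun t => f (boxPath l u x p t)) (psiDp f l u x p α) (Ici α) α := by
  have h := HasFDerivAt.comp_hasDerivWithinAt α
    ((hf.differentiable one_ne_zero (boxPath l u x p α)).hasFDerivAt)
    (hasDerivWithinAt_boxPath hlu hx hα)
  exact h

lemma continuousWithinAt_psiDp (hf : ContDiff ℝ 1 f) (hlu : ∀ i, l i ≤ u i)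
    (hx : ∀ i, l i ≤ x i ∧ x i ≤ u i) {α : ℝ} (hα : 0 ≤ α) :
    ContinuousWithinAt (psiDp f l u x p) (Ici α) α := by
  have h1 : Continuous fun t =>
      (fderiv ℝ f (boxPath l u x p t)) (projDir l u (boxPath l u x p α) p) :=
    ((hf.continuous_fderiv one_ne_zero).comp (continuous_boxPath hlu)).clm_apply continuous_const
  apply h1.continuousWithinAt.congr_of_eventuallyEq
  · filter_upwards [projDir_eventually_right (p := p) hlu hx hα] with t ht
    simp only [psiDp, ht]
  · rfl

lemma psiDm_le_of_lt_bound (hf : ContDiff ℝ 1 f) (hlu : ∀ i, l i ≤ u i)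
    (hx : ∀ i, l i ≤ x i ∧ x i ≤ u i) {α m : ℝ} (hα : 0 < α)
    (h : ∀ t, 0 < t → t < α → psiDp f l u x p t ≤ m) : psiDm f l u x p α ≤ m := by
  have h1 : Continuous fun t =>
      (fderiv ℝ f (boxPath l u x p t)) (projDirMinus l u x p α) :=
    ((hf.continuous_fderiv one_ne_zero).comp (continuous_boxPath hlu)).clm_apply continuous_const
  have h2 : Filter.Tendsto (fun t => (fderiv ℝ f (boxPath l u x p t)) (projDirMinus l u x p α))
      (𝓝[Iio α] α) (𝓝 (psiDm f l u x p α)) :=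
    (h1.tendsto α).mono_left nhdsWithin_le_nhds
  have hEq : (fun t => (fderiv ℝ f (boxPath l u x p t)) (projDirMinus l u x p α))
      =ᶠ[𝓝[Iio α] α] psiDp f l u x p := by
    filter_upwards [projDir_eventually_left (p := p) hlu hx hα] with t ht
    simp only [psiDp, ht]
  have h3 : Filter.Tendsto (psiDp f l u x p) (𝓝[Iio α] α) (𝓝 (psiDm f l u x p α)) :=
    h2.congr' hEq
  refine le_of_tendsto h3 ?_
  have hpos : ∀ᶠ t in 𝓝[Iio α] α, 0 < t :=
    (continuous_id.continuousAt.eventually_const_lt hα).filter_mono nhdsWithin_le_nhds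
  filter_upwards [eventually_mem_nhdsWithin, hpos] with t (h4 : t < α) h5
  exact h t h5 h4

end Aux

/-- **Existence of a quasi-Wolfe step** (Proposition 3.3).  If `f` is `C¹`, the level
set of `f` at `x ∈ Ω` is bounded and `p` is a descent direction (`∇f(x)ᵀP_x(p) < 0`),
then either a whole interval `(α_L, α_U)` of quasi-Wolfe steps exists, or there is a
quasi-Wolfe step satisfying condition (C4). -/
theorem quasi_wolfe_step_exists {n : ℕ} (f : (Fin n → ℝ) → ℝ) (l u x p : Fin n → ℝ)
    (ηA ηW : ℝ)
    (hf : ContDiff ℝ 1 f) (hlu : ∀ i, l i ≤ u i)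
    (hx : ∀ i, l i ≤ x i ∧ x i ≤ u i)
    (hlev : Bornology.IsBounded
      {y : Fin n → ℝ | (∀ i, l i ≤ y i ∧ y i ≤ u i) ∧ f y ≤ f x})
    (hdesc : fderiv ℝ f x (projDir l u x p) < 0)
    (hA : 0 < ηA) (hAW : ηA < ηW) (hW1 : ηW < 1) :
    (∃ αL αU : ℝ, 0 < αL ∧ αL < αU ∧
        ∀ α ∈ Set.Ioo αL αU, QuasiWolfeStep f l u x p ηA ηW α) ∨
    (∃ α : ℝ, QuasiWolfeStep f l u x p ηA ηW α ∧
        psiDm f l u x p α ≠ psiDp f l u x p α ∧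
        psiDm f l u x p α ≤ 0 ∧ 0 ≤ psiDp f l u x p α) := by
  classical
  open Set Filter Topology in
  set ψ : ℝ → ℝ := fun t => f (boxPath l u x p t) with hψdef
  have hψcont : Continuous ψ := hf.continuous.comp (continuous_boxPath hlu)
  have hpath0 : boxPath l u x p 0 = x := boxPath_zero hx
  set c : ℝ := psiDp f l u x p 0 with hcdef
  have hc : c < 0 := by
    rw [hcdef]; simp only [psiDp, hpath0]; exact hdesc
  have hW0 : 0 < ηW := hA.trans hAW
  set m₁ : ℝ := ηW * c with hm₁def
  set m₂ : ℝ := -(ηW * c) with hm₂def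
  have hm₁ : m₁ < 0 := mul_neg_of_pos_of_neg hW0 hc
  have hm₂ : 0 < m₂ := by rw [hm₂def]; linarith [hm₁]
  have hcm₁ : c < m₁ := by rw [hm₁def]; nlinarith
  have hAc : m₁ < ηA * c := by rw [hm₁def]; nlinarith
  have hcA : c < ηA * c := by nlinarith
  have hηAc : ηA * c < 0 := mul_neg_of_pos_of_neg hA hc
  -- right derivative of ψ
  have hDer : ∀ t : ℝ, 0 ≤ t → HasDerivWithinAt ψ (psiDp f l u x p t) (Set.Ici t) t :=
    fun t ht => hasDerivWithinAt_psi hf hlu hx ht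
  -- Step A : strict Armijo near 0
  have hslope : Filter.Tendsto (slope ψ 0) (𝓝[Set.Ioi 0] 0) (𝓝 c) := by
    have h2 := hasDerivWithinAt_iff_tendsto_slope.1 (hDer 0 le_rfl)
    exact h2.mono_left (nhdsWithin_mono 0 fun t ht => ⟨Set.Ioi_subset_Ici_self ht, by simpa using ht.ne'⟩)
  have hsl2 : ∀ᶠ t in 𝓝[Set.Ioi 0] 0, slope ψ 0 t < ηA * c := hslope (Iio_mem_nhds hcA)
  obtain ⟨δ, hδpos, hδ⟩ := Metric.mem_nhdsWithin_iff.1 hsl2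
  have hArm0 : ∀ t, 0 < t → t < δ → ψ t < ψ 0 + t * (ηA * c) := by
    intro t ht1 ht2
    have hmem : t ∈ Metric.ball (0:ℝ) δ ∩ Set.Ioi 0 :=
      ⟨by simpa [Real.dist_eq, abs_of_pos ht1] using ht2, ht1⟩
    have h3 : slope ψ 0 t < ηA * c := hδ hmem
    rw [slope_def_field, sub_zero] at h3
    have h4 := (div_lt_iff₀ ht1).1 h3
    linarith
  -- Step B : compactness of the level set
  have hxS : x ∈ {y : Fin n → ℝ | (∀ i, l i ≤ y i ∧ y i ≤ u i) ∧ f y ≤ f x} := ⟨hx, le_rfl⟩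
  have hSclosed : IsClosed {y : Fin n → ℝ | (∀ i, l i ≤ y i ∧ y i ≤ u i) ∧ f y ≤ f x} := by
    have h1 : IsClosed {y : Fin n → ℝ | ∀ i, l i ≤ y i ∧ y i ≤ u i} := by
      have he : {y : Fin n → ℝ | ∀ i, l i ≤ y i ∧ y i ≤ u i}
          = ⋂ i, ({y : Fin n → ℝ | l i ≤ y i} ∩ {y : Fin n → ℝ | y i ≤ u i}) := by
        ext y; simp [Set.mem_iInter, Set.mem_setOf_eq, forall_and]
      rw [he]
      exact isClosed_iInter fun i => (isClosed_le continuous_const (continuous_apply i)).inter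
        (isClosed_le (continuous_apply i) continuous_const)
    have h2 : {y : Fin n → ℝ | (∀ i, l i ≤ y i ∧ y i ≤ u i) ∧ f y ≤ f x}
        = {y : Fin n → ℝ | ∀ i, l i ≤ y i ∧ y i ≤ u i} ∩ {y : Fin n → ℝ | f y ≤ f x} := rfl
    rw [h2]
    exact h1.inter (isClosed_le hf.continuous continuous_const)
  have hScpt : IsCompact {y : Fin n → ℝ | (∀ i, l i ≤ y i ∧ y i ≤ u i) ∧ f y ≤ f x} :=
    Metric.isCompact_of_isClosed_isBounded hSclosed hlev
  obtain ⟨y₀, hy₀S, hy₀'⟩ := hScpt.exists_isMinOn ⟨x, hxS⟩ hf.continuous.continuousOn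
  have hy₀ : ∀ y ∈ {y : Fin n → ℝ | (∀ i, l i ≤ y i ∧ y i ≤ u i) ∧ f y ≤ f x}, f y₀ ≤ f y :=
    fun y hy => hy₀' hy
  set m : ℝ := f y₀ with hmdef
  have hψ0x : ψ 0 = f x := by rw [hψdef]; simp only; rw [hpath0]
  have hmψ0 : m ≤ ψ 0 := by rw [hψ0x]; exact hy₀ x hxS
  have hpathS : ∀ t, ψ t ≤ ψ 0 → boxPath l u x p t ∈
      {y : Fin n → ℝ | (∀ i, l i ≤ y i ∧ y i ≤ u i) ∧ f y ≤ f x} := by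
    intro t ht
    exact ⟨fun i => boxPath_mem hlu t i, by rw [← hψ0x]; exact ht⟩
  have hbig : ∀ t, ψ 0 + t * (ηA * c) < m → ψ 0 + t * (ηA * c) < ψ t := by
    intro t hlt
    rcases le_or_gt (ψ t) (ψ 0) with h | h
    · have := hy₀ _ (hpathS t h)
      linarith
    · linarith
  -- the first Armijo crossing A₀
  set M₀ : ℝ := (m - ψ 0 - 1) / (ηA * c) with hM₀def
  set M : ℝ := max M₀ δ with hMdef
  have hMδ : δ ≤ M := le_max_right _ _
  have hgM : ψ 0 + M * (ηA * c) < m := by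
    have h1 : M * (ηA * c) ≤ M₀ * (ηA * c) :=
      mul_le_mul_of_nonpos_right (le_max_left _ _) hηAc.le
    have h2 : M₀ * (ηA * c) = m - ψ 0 - 1 := div_mul_cancel₀ _ (ne_of_lt hηAc)
    linarith
  set a : ℝ := δ / 2 with hadef
  have hapos : 0 < a := by rw [hadef]; positivity
  have haδ : a < δ := by rw [hadef]; linarith
  have haM : a ≤ M := by linarith
  set g : ℝ → ℝ := fun t => ψ t - (ψ 0 + t * (ηA * c)) with hgdef
  have hgcont : Continuous g := by
    rw [hgdef]; fun_prop
  have hga : g a < 0 := by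
    have := hArm0 a hapos haδ
    rw [hgdef]; simp only; linarith
  have hgMpos : 0 < g M := by
    have := hbig M hgM
    rw [hgdef]; simp only; linarith
  obtain ⟨z, hzmem, hzval⟩ :=
    intermediate_value_Icc haM hgcont.continuousOn ⟨hga.le, hgMpos.le⟩
  have hZne : {t : ℝ | t ∈ Set.Icc a M ∧ g t = 0}.Nonempty := ⟨z, hzmem, hzval⟩
  have hZclosed : IsClosed {t : ℝ | t ∈ Set.Icc a M ∧ g t = 0} := by
    have he : {t : ℝ | t ∈ Set.Icc a M ∧ g t = 0} = Set.Icc a M ∩ g ⁻¹' {0} := by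
      ext t; simp [Set.mem_setOf_eq]
    rw [he]
    exact isClosed_Icc.inter (isClosed_singleton.preimage hgcont)
  have hZbdd : BddBelow {t : ℝ | t ∈ Set.Icc a M ∧ g t = 0} := ⟨a, fun t ht => ht.1.1⟩
  set A₀ : ℝ := sInf {t : ℝ | t ∈ Set.Icc a M ∧ g t = 0} with hA₀def
  have hAZ : A₀ ∈ {t : ℝ | t ∈ Set.Icc a M ∧ g t = 0} := hZclosed.csInf_mem hZne hZbdd
  have hAa : a ≤ A₀ := hAZ.1.1
  have hAM : A₀ ≤ M := hAZ.1.2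
  have hApos : 0 < A₀ := lt_of_lt_of_le hapos hAa
  have hgA : g A₀ = 0 := hAZ.2
  have hstrict : ∀ t, 0 < t → t < A₀ → g t < 0 := by
    intro t ht1 ht2
    rcases lt_or_ge t a with h | h
    · have := hArm0 t ht1 (h.trans haδ)
      rw [hgdef]; simp only; linarith
    · by_contra hge
      push_neg at hge
      obtain ⟨z', hz'mem, hz'val⟩ :=
        intermediate_value_Icc h hgcont.continuousOn ⟨hga.le, hge⟩
      have hle := csInf_le hZbdd
        (show z' ∈ {t : ℝ | t ∈ Set.Icc a M ∧ g t = 0} from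
          ⟨⟨hz'mem.1, hz'mem.2.trans (ht2.le.trans hAM)⟩, hz'val⟩)
      have : z' ≤ t := hz'mem.2
      rw [← hA₀def] at hle
      linarith
  have hψlt : ∀ t, 0 < t → t < A₀ → ψ t < ψ 0 + t * (ηA * c) := by
    intro t h1 h2
    have h3 := hstrict t h1 h2
    rw [hgdef] at h3; simp only at h3; linarith
  have hArm : ∀ t, 0 < t → t < A₀ →
      f (boxPath l u x p t) ≤ f (boxPath l u x p 0) + t * ηA * psiDp f l u x p 0 := by
    intro t h1 h2
    have h3 := hψlt t h1 h2
    have hma : t * ηA * c = t * (ηA * c) := by ring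
    show ψ t ≤ ψ 0 + t * ηA * c
    linarith
  have habs0 : |psiDp f l u x p 0| = -c := by rw [← hcdef]; exact abs_of_neg hc
  -- main case analysis
  by_cases hmid : ∃ t, (0 < t ∧ t < A₀) ∧
      m₁ < psiDp f l u x p t ∧ psiDp f l u x p t < m₂
  · left
    obtain ⟨t, ⟨ht0, htA⟩, htm⟩ := hmid
    have hcwa := continuousWithinAt_psiDp (p := p) hf hlu hx ht0.le
    have hev : psiDp f l u x p ⁻¹' Set.Ioo m₁ m₂ ∈ 𝓝[Set.Ici t] t :=
      hcwa (Ioo_mem_nhds htm.1 htm.2)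
    obtain ⟨ε, hεpos, hε⟩ := Metric.mem_nhdsWithin_iff.1 hev
    refine ⟨t, min (t + ε) A₀, ht0, lt_min (by linarith) htA, ?_⟩
    intro s hs
    obtain ⟨hs1, hs2⟩ := hs
    have hsA : s < A₀ := lt_of_lt_of_le hs2 (min_le_right _ _)
    have hstε : s < t + ε := lt_of_lt_of_le hs2 (min_le_left _ _)
    have hsball : s ∈ Metric.ball t ε ∩ Set.Ici t :=
      ⟨by simp only [Metric.mem_ball, Real.dist_eq]; rw [abs_of_pos (by linarith)]; linarith, le_of_lt hs1⟩
    have hio := hε hsball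
    have hs0 : 0 < s := ht0.trans hs1
    refine ⟨hs0, hArm s hs0 hsA, Or.inr (Or.inl ?_)⟩
    rw [habs0, abs_le]
    have h1 : m₁ < psiDp f l u x p s := hio.1
    have h2 : psiDp f l u x p s < m₂ := hio.2
    rw [hm₁def] at h1
    rw [hm₂def] at h2
    have e1 : -(ηW * -c) = ηW * c := by ring
    have e2 : ηW * -c = -(ηW * c) := by ring
    constructor
    · rw [e1]; linarith
    · rw [e2]; linarith
  · push_neg at hmid
    have hdichot : ∀ t, 0 < t → t < A₀ →
        psiDp f l u x p t ≤ m₁ ∨ m₂ ≤ psiDp f l u x p t := by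
      intro t h1 h2
      rcases le_or_gt (psiDp f l u x p t) m₁ with h | h
      · exact Or.inl h
      · exact Or.inr (hmid t ⟨h1, h2⟩ h)
    by_cases hbig2 : ∃ t, (0 < t ∧ t < A₀) ∧ m₂ ≤ psiDp f l u x p t
    · right
      obtain ⟨t₁, ⟨ht₁0, ht₁A⟩, ht₁⟩ := hbig2
      have hS₂ne : {t : ℝ | t ∈ Set.Icc 0 t₁ ∧ m₂ ≤ psiDp f l u x p t}.Nonempty :=
        ⟨t₁, ⟨ht₁0.le, le_rfl⟩, ht₁⟩
      have hS₂bdd : BddBelow {t : ℝ | t ∈ Set.Icc 0 t₁ ∧ m₂ ≤ psiDp f l u x p t} :=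
        ⟨0, fun s hs => hs.1.1⟩
      set τ : ℝ := sInf {t : ℝ | t ∈ Set.Icc 0 t₁ ∧ m₂ ≤ psiDp f l u x p t} with hτdef
      have hτ0 : 0 ≤ τ := le_csInf hS₂ne fun s hs => hs.1.1
      have hτt₁ : τ ≤ t₁ := csInf_le hS₂bdd ⟨⟨ht₁0.le, le_rfl⟩, ht₁⟩
      have hτval : m₂ ≤ psiDp f l u x p τ := by
        by_contra hlt
        push_neg at hlt
        have hcwa := continuousWithinAt_psiDp (p := p) hf hlu hx hτ0
        have hev : psiDp f l u x p ⁻¹' Set.Iio m₂ ∈ 𝓝[Set.Ici τ] τ :=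
          hcwa (Iio_mem_nhds hlt)
        obtain ⟨ε, hεpos, hε⟩ := Metric.mem_nhdsWithin_iff.1 hev
        have hτε : τ + ε ≤ τ := by
          refine le_csInf hS₂ne fun s hs => ?_
          by_contra hs'
          push_neg at hs'
          have hsτ : τ ≤ s := csInf_le hS₂bdd hs
          have hmem : s ∈ Metric.ball τ ε ∩ Set.Ici τ :=
            ⟨by simp only [Metric.mem_ball, Real.dist_eq]; rw [abs_of_nonneg (by linarith)]; linarith, hsτ⟩
          exact absurd hs.2 (not_le.2 (hε hmem))
        linarith
      have hτpos : 0 < τ := by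
        rcases hτ0.lt_or_eq with h | h
        · exact h
        · exfalso
          rw [← h] at hτval
          rw [← hcdef] at hτval
          linarith
      have hτA : τ < A₀ := lt_of_le_of_lt hτt₁ ht₁A
      have hlow : ∀ s, 0 < s → s < τ → psiDp f l u x p s ≤ m₁ := by
        intro s h1 h2
        rcases hdichot s h1 (h2.trans hτA) with h | h
        · exact h
        · exfalso
          have := csInf_le hS₂bdd
            (show s ∈ {t : ℝ | t ∈ Set.Icc 0 t₁ ∧ m₂ ≤ psiDp f l u x p t} from
              ⟨⟨h1.le, h2.le.trans hτt₁⟩, h⟩)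
          rw [← hτdef] at this
          linarith
      have hminus : psiDm f l u x p τ ≤ m₁ :=
        psiDm_le_of_lt_bound hf hlu hx hτpos hlow
      refine ⟨τ, ⟨hτpos, hArm τ hτpos hτA,
        Or.inr (Or.inr ⟨ne_of_lt (by linarith), by linarith, by linarith⟩)⟩,
        ne_of_lt (by linarith), by linarith, by linarith⟩
    · exfalso
      push_neg at hbig2
      have hallow : ∀ t ∈ Set.Ico (0:ℝ) A₀, psiDp f l u x p t ≤ m₁ := by
        intro t ht
        rcases ht.1.lt_or_eq with h | h
        · rcases hdichot t h ht.2 with h' | h'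
          · exact h'
          · exact absurd h' (not_le.2 (hbig2 t ⟨h, ht.2⟩))
        · rw [← h, ← hcdef]; exact hcm₁.le
      have hcomp := image_le_of_deriv_right_le_deriv_boundary
        (f := ψ) (f' := psiDp f l u x p) (a := 0) (b := A₀)
        hψcont.continuousOn (fun t ht => hDer t ht.1)
        (B := fun t => ψ 0 + t * m₁) (B' := fun _ => m₁)
        (by simp) (Continuous.continuousOn (by fun_prop))
        (fun t _ => ((hasDerivAt_mul_const m₁).const_add (ψ 0)).hasDerivWithinAt)
        hallow
      have hψA := hcomp (Set.right_mem_Icc.2 hApos.le)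
      have hgA' : ψ A₀ = ψ 0 + A₀ * (ηA * c) := by
        rw [hgdef] at hgA; simp only at hgA; linarith
      nlinarith [hψA, hgA', hApos, hAc]
end

section
/- Let ψ : ℝ → ℝ be admissible on [0,b] for every b > 0, with one-sided derivative limits ψ'₊ and ψ'₋, and suppose ψ'₊(0) < 0. Let 0 < η_A < η_W < 1 and define ω(α) = ψ(α) − (ψ(0) + α·η_A·ψ'₊(0)). Let (α_i)_{i≥0} be a strictly monotonically increasing real sequence with α_0 = 0, and suppose j ≥ 1 is the least index at which at least one of the following holds: (a) α_j is a quasi-Wolfe step; (b) ω(α_j) ≥ ω(α_{j−1}); (c) ω'₋(α_j) ≥ 0 (i.e., none of (a),(b),(c) holds at any index i with 1 ≤ i < j). Then there exists a quasi-Wolfe step α* ∈ [α_{j−1}, α_j]. -/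
open Set Filter

lemma right_lim_ge (ψ Dp Dm : ℝ → ℝ) {b x m : ℝ}
    (hadm : AdmissibleOn ψ 0 b Dp Dm) (hx0 : 0 ≤ x) (hxb : x < b)
    (h : ∀ y, x < y → y ≤ b → m * (y - x) ≤ ψ y - ψ x) : m ≤ Dp x := by
  by_contra hlt
  push_neg at hlt
  set m' := (Dp x + m) / 2 with hm'
  have hm'1 : Dp x < m' := by rw [hm']; linarith
  have hm'2 : m' < m := by rw [hm']; linarith
  obtain ⟨S, hS, hdiff, _⟩ := hadm.finite_except
  have h1 : ∀ᶠ y in nhdsWithin x (Ioi x), derivWithin ψ (Icc 0 b) y < m' :=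
    (hadm.tendsto_right x ⟨hx0, hxb⟩).eventually_lt_const hm'1
  have h2 : ∀ᶠ y in nhdsWithin x (Ioi x), y ∉ (↑S : Set ℝ) := by
    have hfin : ((↑S : Set ℝ) \ {x}).Finite := (S.finite_toSet).diff
    have hopen : ((↑S : Set ℝ) \ {x})ᶜ ∈ nhds x :=
      hfin.isClosed.isOpen_compl.mem_nhds (by simp)
    filter_upwards [eventually_nhdsWithin_of_eventually_nhds hopen,
      self_mem_nhdsWithin] with y hy hy'
    intro hyS
    exact hy ⟨hyS, ne_of_gt hy'⟩
  have h3 : ∀ᶠ y in nhdsWithin x (Ioi x), y < b :=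
    eventually_nhdsWithin_of_eventually_nhds (eventually_lt_nhds hxb)
  obtain ⟨u, hu, hsub⟩ := mem_nhdsGT_iff_exists_Ioc_subset.mp
    (h1.and (h2.and h3))
  have hu' : x < u := hu
  have hugood := hsub ⟨hu', le_refl u⟩
  have hub : u < b := hugood.2.2
  -- monotone argument on [x,u] for g y = m' * y - ψ y
  have hmono : StrictMonoOn (fun y => m' * y - ψ y) (Icc x u) := by
    apply strictMonoOn_of_deriv_pos (convex_Icc x u)
    · exact ((continuous_const.mul continuous_id).continuousOn).sub
        (hadm.cont.mono (Icc_subset_Icc hx0 (le_of_lt hub)))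
    · intro y hy
      rw [interior_Icc] at hy
      have hygood := hsub ⟨hy.1, le_of_lt hy.2⟩
      have hymem : y ∈ Icc (0:ℝ) b \ ↑S :=
        ⟨⟨le_trans hx0 (le_of_lt hy.1), le_of_lt hygood.2.2⟩, hygood.2.1⟩
      have hnhds : Icc (0:ℝ) b ∈ nhds y :=
        Icc_mem_nhds (lt_of_le_of_lt hx0 hy.1) hygood.2.2
      have hda : DifferentiableAt ℝ ψ y := (hdiff y hymem).differentiableAt hnhds
      have hdw : derivWithin ψ (Icc 0 b) y = deriv ψ y := derivWithin_of_mem_nhds hnhds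
      have hg : HasDerivAt (fun z => m' * z - ψ z) (m' - deriv ψ y) y := by
        have h := ((hasDerivAt_id y).const_mul m').sub hda.hasDerivAt; simp only [id, mul_one] at h; exact h
      rw [hg.deriv]
      have := hygood.1
      rw [hdw] at this
      linarith
  have hkey := hmono (left_mem_Icc.mpr (le_of_lt hu')) (right_mem_Icc.mpr (le_of_lt hu')) hu'
  have hx' := h u hu' (le_of_lt hub)
  simp only at hkey
  nlinarith

lemma left_lim_le (ψ Dp Dm : ℝ → ℝ) {b x m c : ℝ}
    (hadm : AdmissibleOn ψ 0 b Dp Dm) (hc0 : 0 ≤ c) (hcx : c < x) (hxb : x ≤ b)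
    (h : ∀ y, c ≤ y → y < x → ψ x - ψ y ≤ m * (x - y)) : Dm x ≤ m := by
  by_contra hlt
  push_neg at hlt
  set m' := (Dm x + m) / 2 with hm'
  have hm'1 : m' < Dm x := by rw [hm']; linarith
  have hm'2 : m < m' := by rw [hm']; linarith
  have hx0 : 0 < x := lt_of_le_of_lt hc0 hcx
  obtain ⟨S, hS, hdiff, _⟩ := hadm.finite_except
  have h1 : ∀ᶠ y in nhdsWithin x (Iio x), m' < derivWithin ψ (Icc 0 b) y :=
    (hadm.tendsto_left x ⟨hx0, hxb⟩).eventually_const_lt hm'1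
  have h2 : ∀ᶠ y in nhdsWithin x (Iio x), y ∉ (↑S : Set ℝ) := by
    have hfin : ((↑S : Set ℝ) \ {x}).Finite := (S.finite_toSet).diff
    have hopen : ((↑S : Set ℝ) \ {x})ᶜ ∈ nhds x :=
      hfin.isClosed.isOpen_compl.mem_nhds (by simp)
    filter_upwards [eventually_nhdsWithin_of_eventually_nhds hopen,
      self_mem_nhdsWithin] with y hy hy'
    intro hyS
    exact hy ⟨hyS, ne_of_lt hy'⟩
  have h3 : ∀ᶠ y in nhdsWithin x (Iio x), c < y :=
    eventually_nhdsWithin_of_eventually_nhds (eventually_gt_nhds hcx)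
  obtain ⟨u, hu, hsub⟩ := mem_nhdsLT_iff_exists_Ico_subset.mp
    (h1.and (h2.and h3))
  have hu' : u < x := hu
  have hugood := hsub ⟨le_refl u, hu'⟩
  have huc : c < u := hugood.2.2
  have hmono : StrictMonoOn (fun y => ψ y - m' * y) (Icc u x) := by
    apply strictMonoOn_of_deriv_pos (convex_Icc u x)
    · exact (hadm.cont.mono (Icc_subset_Icc (le_trans hc0 (le_of_lt huc)) hxb)).sub
        ((continuous_const.mul continuous_id).continuousOn)
    · intro y hy
      rw [interior_Icc] at hy
      have hygood := hsub ⟨le_of_lt hy.1, hy.2⟩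
      have hy0 : 0 < y := lt_of_le_of_lt hc0 (lt_of_lt_of_le huc (le_of_lt hy.1))
      have hyb : y < b := lt_of_lt_of_le hy.2 hxb
      have hymem : y ∈ Icc (0:ℝ) b \ ↑S :=
        ⟨⟨le_of_lt hy0, le_of_lt hyb⟩, hygood.2.1⟩
      have hnhds : Icc (0:ℝ) b ∈ nhds y := Icc_mem_nhds hy0 hyb
      have hda : DifferentiableAt ℝ ψ y := (hdiff y hymem).differentiableAt hnhds
      have hdw : derivWithin ψ (Icc 0 b) y = deriv ψ y := derivWithin_of_mem_nhds hnhds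
      have hg : HasDerivAt (fun z => ψ z - m' * z) (deriv ψ y - m') y := by
        have h := hda.hasDerivAt.sub ((hasDerivAt_id y).const_mul m'); simp only [id, mul_one] at h; exact h
      rw [hg.deriv]
      have := hygood.1
      rw [hdw] at this
      linarith
  have hkey := hmono (left_mem_Icc.mpr (le_of_lt hu')) (right_mem_Icc.mpr (le_of_lt hu')) hu'
  have hx' := h u (le_of_lt huc) hu'
  simp only at hkey
  nlinarith

lemma curv_cases {D0 ηA ηW dm dp : ℝ} (hD0 : D0 < 0) (hA : 0 < ηA)
    (hAW : ηA < ηW) (hm : dm ≤ ηA * D0) (hp : ηA * D0 ≤ dp) :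
    |dm| ≤ ηW * |D0| ∨ |dp| ≤ ηW * |D0| ∨ (dm ≠ dp ∧ dm ≤ 0 ∧ 0 ≤ dp) := by
  have habs : |D0| = -D0 := abs_of_neg hD0
  have hW0 : 0 < ηW := lt_trans hA hAW
  have hAD : ηA * D0 < 0 := mul_neg_of_pos_of_neg hA hD0
  rcases le_or_gt dp (ηW * |D0|) with hle | hgt
  · right; left
    rw [abs_le]
    refine ⟨?_, hle⟩
    rw [habs]
    nlinarith
  · right; right
    have hdp : 0 < dp := lt_of_le_of_lt (by positivity) hgt
    exact ⟨ne_of_lt (by linarith), by linarith, le_of_lt hdp⟩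
/-- **Stage one of a quasi-Wolfe search** (Proposition 3.4).
For `ψ` admissible on every `[0,b]` with `ψ'₊(0) < 0`, if `j ≥ 1` is the least index
at which one of the stage-one conditions (a) `α j` is a quasi-Wolfe step,
(b) `ω(α j) ≥ ω(α (j-1))`, (c) `ω'₋(α j) ≥ 0` holds, then `[α (j-1), α j]` contains
a quasi-Wolfe step.  (Here `ω t = ψ t − (ψ 0 + t·ηA·ψ'₊(0))`, so `ω'₋ t = Dm t − ηA·Dp 0`.) -/
theorem quasi_wolfe_stage_one (ψ Dp Dm : ℝ → ℝ) (ηA ηW : ℝ)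
    (hadm : ∀ b : ℝ, 0 < b → AdmissibleOn ψ 0 b Dp Dm)
    (hd0 : Dp 0 < 0)
    (hA : 0 < ηA) (hAW : ηA < ηW) (hW1 : ηW < 1)
    (ω : ℝ → ℝ) (hω : ω = fun t => ψ t - (ψ 0 + t * ηA * Dp 0))
    (α : ℕ → ℝ) (hmono : StrictMono α) (h0 : α 0 = 0)
    (j : ℕ) (hj1 : 1 ≤ j)
    (stageOne : ℕ → Prop)
    (hstage : ∀ i, stageOne i ↔
      (QuasiWolfeAbs ψ Dp Dm ηA ηW (α i) ∨ ω (α (i - 1)) ≤ ω (α i) ∨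
        0 ≤ Dm (α i) - ηA * Dp 0))
    (hj : stageOne j)
    (hleast : ∀ i, 1 ≤ i → i < j → ¬ stageOne i) :
    ∃ t ∈ Set.Icc (α (j - 1)) (α j), QuasiWolfeAbs ψ Dp Dm ηA ηW t := by
  --
  have hd : 0 < α j := h0 ▸ hmono (Nat.pos_of_ne_zero (by omega))
  have hc0 : 0 ≤ α (j - 1) := h0 ▸ hmono.monotone (Nat.zero_le _)
  have hcd : α (j - 1) < α j := hmono (by omega)
  have hadm' := hadm (α j) hd
  -- the Armijo chain
  have hchain : ∀ i, i ≤ j - 1 → ω (α i) ≤ 0 := by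
    intro i
    induction i with
    | zero => intro _; simp [hω, h0]
    | succ i ih =>
      intro hi
      have hns := hleast (i + 1) (by omega) (by omega)
      rw [hstage] at hns
      push_neg at hns
      have hb := hns.2.1
      simp only [Nat.add_sub_cancel] at hb
      have := ih (by omega)
      linarith
  have hωc : ω (α (j - 1)) ≤ 0 := hchain (j - 1) le_rfl
  by_cases hQ : QuasiWolfeAbs ψ Dp Dm ηA ηW (α j)
  · exact ⟨α j, ⟨le_of_lt hcd, le_rfl⟩, hQ⟩
  have hbc : ω (α (j - 1)) ≤ ω (α j) ∨ ηA * Dp 0 ≤ Dm (α j) := by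
    rw [hstage] at hj
    rcases hj with h | h | h
    · exact absurd h hQ
    · exact Or.inl h
    · exact Or.inr (by linarith)
  -- c is not a minimizer of ω on [c,d]
  have hnotmin : ∃ y ∈ Set.Icc (α (j - 1)) (α j), ω y < ω (α (j - 1)) := by
    by_contra hmin
    push_neg at hmin
    have hDpc : ηA * Dp 0 ≤ Dp (α (j - 1)) := by
      apply right_lim_ge ψ Dp Dm hadm' hc0 hcd
      intro y hy1 hy2
      have := hmin y ⟨le_of_lt hy1, hy2⟩
      simp only [hω] at this
      linarith
    rcases eq_or_lt_of_le hj1 with h1 | h1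
    · -- j = 1 : contradiction with Dp 0 < ηA * Dp 0
      have hj0 : j - 1 = 0 := by omega
      rw [hj0, h0] at hDpc
      nlinarith
    · -- j > 1 : α (j-1) is a quasi-Wolfe step, contradicting minimality
      have hns := hleast (j - 1) (by omega) (by omega)
      rw [hstage] at hns
      push_neg at hns
      obtain ⟨hnQW, _, hDmc⟩ := hns
      apply hnQW
      refine ⟨h0 ▸ hmono (by omega : 0 < j - 1), ?_, ?_⟩
      · simp only [hω] at hωc; linarith
      · exact curv_cases hd0 hA hAW (by linarith) hDpc
  obtain ⟨y0, hy0, hy0lt⟩ := hnotmin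
  -- minimizer of ω on [c, d]
  have hcont : ContinuousOn ω (Set.Icc (α (j - 1)) (α j)) := by
    rw [hω]
    exact (hadm'.cont.mono (Set.Icc_subset_Icc hc0 le_rfl)).sub
      (Continuous.continuousOn (by continuity))
  obtain ⟨t, htmem, htmin'⟩ := isCompact_Icc.exists_isMinOn ⟨y0, hy0⟩ hcont
  have htmin : ∀ y ∈ Set.Icc (α (j - 1)) (α j), ω t ≤ ω y := fun y hy => htmin' hy
  have htc : α (j - 1) < t := by
    rcases eq_or_lt_of_le htmem.1 with h | h
    · exact absurd (htmin y0 hy0) (by rw [← h]; linarith)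
    · exact h
  have ht0 : 0 < t := lt_of_le_of_lt hc0 htc
  have hωt : ω t ≤ 0 := le_trans (htmin _ ⟨le_rfl, le_of_lt hcd⟩) hωc
  have harmijo : ψ t ≤ ψ 0 + t * ηA * Dp 0 := by simp only [hω] at hωt; linarith
  have hDmt : Dm t ≤ ηA * Dp 0 := by
    apply left_lim_le ψ Dp Dm hadm' hc0 htc htmem.2
    intro y hy1 hy2
    have := htmin y ⟨hy1, le_trans (le_of_lt hy2) htmem.2⟩
    simp only [hω] at this
    linarith
  rcases eq_or_lt_of_le htmem.2 with htd | htd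
  · -- t = α j : the minimum is at the right endpoint
    rcases hbc with hb | hc
    · -- impossible: ω c ≤ ω d = min < ω c
      have := htmin y0 hy0
      rw [htd] at this
      linarith
    · -- C2 at α j
      refine ⟨α j, ⟨le_of_lt hcd, le_rfl⟩, hd, ?_, Or.inl ?_⟩
      · rw [← htd]; exact harmijo
      · rw [← htd]
        have : Dm t = ηA * Dp 0 := le_antisymm hDmt (htd ▸ hc)
        rw [this, abs_of_neg hd0, abs_of_neg (mul_neg_of_pos_of_neg hA hd0)]
        nlinarith
  · -- t interior : quasi-Wolfe at t
    have hDpt : ηA * Dp 0 ≤ Dp t := by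
      apply right_lim_ge ψ Dp Dm hadm' (le_of_lt ht0) htd
      intro y hy1 hy2
      have := htmin y ⟨le_trans htmem.1 (le_of_lt hy1), hy2⟩
      simp only [hω] at this
      linarith
    exact ⟨t, ⟨le_of_lt htc, htmem.2⟩, ht0, harmijo,
      curv_cases hd0 hA hAW hDmt hDpt⟩
end

section
/- Let ψ : ℝ → ℝ be admissible on [0,b] for every b > 0, with one-sided derivative limits ψ'₊ and ψ'₋, and suppose ψ'₊(0) < 0. Let 0 < η_A < η_W < 1 and define ω(α) = ψ(α) − (ψ(0) + α·η_A·ψ'₊(0)). Suppose α_low, α_high ≥ 0 are distinct points such that (a) ω(α_low) ≤ 0; (b) ω(α_low) ≤ ω(α_high); and (c) ω'₊(α_low) < 0 if α_low < α_high, or ω'₋(α_low) > 0 if α_low > α_high. Then there exists a quasi-Wolfe step α* in the closed interval with endpoints α_low and α_high. -/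
open Set Filter

lemma quasi_aux_right (f : ℝ → ℝ) (B : ℝ) (S : Finset ℝ)
    (hcont : ContinuousOn f (Set.Icc 0 B))
    (hdiff : ∀ y ∈ Set.Icc 0 B \ ↑S, DifferentiableWithinAt ℝ f (Set.Icc 0 B) y)
    {x L c e : ℝ} (hx0 : 0 ≤ x) (hLc : L < c)
    (ht : Filter.Tendsto (derivWithin f (Set.Icc 0 B)) (nhdsWithin x (Set.Ioi x)) (nhds L))
    (hxe : x < e) (heB : e ≤ B) :
    ∃ t ∈ Set.Ioo x e, f t - c * t < f x - c * x := by
  have hU : {y | derivWithin f (Set.Icc 0 B) y < c} ∈ nhdsWithin x (Set.Ioi x) :=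
    ht (Iio_mem_nhds hLc)
  have hS : ((↑(S.erase x) : Set ℝ))ᶜ ∈ nhdsWithin x (Set.Ioi x) := by
    apply mem_nhdsWithin_of_mem_nhds
    apply IsOpen.mem_nhds (S.erase x).finite_toSet.isClosed.isOpen_compl
    simp
  obtain ⟨u, hu, huo⟩ := mem_nhdsGT_iff_exists_Ioo_subset.mp (Filter.inter_mem hU hS)
  simp only [Set.mem_Ioi] at hu
  set d := min u e with hd
  set t := (x + d)/2 with htdef
  have hxd : x < d := lt_min hu hxe
  have htd : t < d := by rw [htdef]; linarith
  have hxt : x < t := by rw [htdef]; linarith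
  have hde : d ≤ e := min_le_right u e
  have hdu : d ≤ u := min_le_left u e
  have hsub2 : Set.Icc x t ⊆ Set.Icc 0 B := Set.Icc_subset_Icc hx0 (by linarith)
  have key : StrictAntiOn (fun s => f s - c * s) (Set.Icc x t) := by
    apply strictAntiOn_of_deriv_neg (convex_Icc _ _)
    · exact (hcont.mono hsub2).sub (continuousOn_const.mul continuousOn_id)
    · intro y hy
      rw [interior_Icc] at hy
      have hyu : y ∈ Set.Ioo x u := ⟨hy.1, by linarith [hy.2]⟩
      have hy0 : 0 < y := lt_of_le_of_lt hx0 hy.1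
      have hyB : y < B := by linarith [hy.2]
      have hyS : y ∉ (↑S : Set ℝ) := by
        intro h
        exact (huo hyu).2 (Finset.mem_coe.2 (Finset.mem_erase.2 ⟨ne_of_gt hy.1, h⟩))
      have hdy : DifferentiableWithinAt ℝ f (Set.Icc 0 B) y :=
        hdiff y ⟨Set.mem_Icc.2 ⟨hy0.le, hyB.le⟩, hyS⟩
      have hnh : Set.Icc (0:ℝ) B ∈ nhds y := Icc_mem_nhds hy0 hyB
      have hda : DifferentiableAt ℝ f y := hdy.differentiableAt hnh
      have hlt : deriv f y < c := by
        have h2 := (huo hyu).1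
        simp only [Set.mem_setOf_eq] at h2
        rwa [derivWithin_of_mem_nhds hnh] at h2
      have h1 : HasDerivAt (fun s : ℝ => f s - c * s) (deriv f y - c) y := by
        exact (hda.hasDerivAt.sub ((hasDerivAt_id y).const_mul c)).congr_deriv (by simp)
      rw [h1.deriv]
      linarith
  exact ⟨t, ⟨hxt, lt_of_lt_of_le htd hde⟩,
    key (Set.left_mem_Icc.2 hxt.le) (Set.right_mem_Icc.2 hxt.le) hxt⟩

lemma quasi_aux_left (f : ℝ → ℝ) (B : ℝ) (S : Finset ℝ)
    (hcont : ContinuousOn f (Set.Icc 0 B))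
    (hdiff : ∀ y ∈ Set.Icc 0 B \ ↑S, DifferentiableWithinAt ℝ f (Set.Icc 0 B) y)
    {x L c e : ℝ} (hxB : x ≤ B) (hcL : c < L)
    (ht : Filter.Tendsto (derivWithin f (Set.Icc 0 B)) (nhdsWithin x (Set.Iio x)) (nhds L))
    (he0 : 0 ≤ e) (hex : e < x) :
    ∃ t ∈ Set.Ioo e x, f t - c * t < f x - c * x := by
  have hU : {y | c < derivWithin f (Set.Icc 0 B) y} ∈ nhdsWithin x (Set.Iio x) :=
    ht (Ioi_mem_nhds hcL)
  have hS : ((↑(S.erase x) : Set ℝ))ᶜ ∈ nhdsWithin x (Set.Iio x) := by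
    apply mem_nhdsWithin_of_mem_nhds
    apply IsOpen.mem_nhds (S.erase x).finite_toSet.isClosed.isOpen_compl
    simp
  obtain ⟨u, hu, huo⟩ := mem_nhdsLT_iff_exists_Ioo_subset.mp (Filter.inter_mem hU hS)
  simp only [Set.mem_Iio] at hu
  set d := max u e with hd
  set t := (x + d)/2 with htdef
  have hxd : d < x := max_lt hu hex
  have htd : d < t := by rw [htdef]; linarith
  have hxt : t < x := by rw [htdef]; linarith
  have hde : e ≤ d := le_max_right u e
  have hdu : u ≤ d := le_max_left u e
  have hsub2 : Set.Icc t x ⊆ Set.Icc 0 B := Set.Icc_subset_Icc (by linarith) hxB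
  have key : StrictMonoOn (fun s => f s - c * s) (Set.Icc t x) := by
    apply strictMonoOn_of_deriv_pos (convex_Icc _ _)
    · exact (hcont.mono hsub2).sub (continuousOn_const.mul continuousOn_id)
    · intro y hy
      rw [interior_Icc] at hy
      have hyu : y ∈ Set.Ioo u x := ⟨by linarith [hy.1], hy.2⟩
      have hy0 : 0 < y := by linarith [hy.1]
      have hyB : y < B := lt_of_lt_of_le hy.2 hxB
      have hyS : y ∉ (↑S : Set ℝ) := by
        intro h
        exact (huo hyu).2 (Finset.mem_coe.2 (Finset.mem_erase.2 ⟨ne_of_lt hy.2, h⟩))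
      have hdy : DifferentiableWithinAt ℝ f (Set.Icc 0 B) y :=
        hdiff y ⟨Set.mem_Icc.2 ⟨hy0.le, hyB.le⟩, hyS⟩
      have hnh : Set.Icc (0:ℝ) B ∈ nhds y := Icc_mem_nhds hy0 hyB
      have hda : DifferentiableAt ℝ f y := hdy.differentiableAt hnh
      have hlt : c < deriv f y := by
        have h2 := (huo hyu).1
        simp only [Set.mem_setOf_eq] at h2
        rwa [derivWithin_of_mem_nhds hnh] at h2
      have h1 : HasDerivAt (fun s : ℝ => f s - c * s) (deriv f y - c) y := by
        exact (hda.hasDerivAt.sub ((hasDerivAt_id y).const_mul c)).congr_deriv (by simp)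
      rw [h1.deriv]
      linarith
  exact ⟨t, ⟨lt_of_le_of_lt hde htd, hxt⟩,
    key (Set.left_mem_Icc.2 hxt.le) (Set.right_mem_Icc.2 hxt.le) hxt⟩

/-- **Stage two of a quasi-Wolfe search** (Proposition 3.5).
For `ψ` admissible on every `[0,b]` with `ψ'₊(0) < 0`, if `ω(α_low) ≤ 0`,
`ω(α_low) ≤ ω(α_high)`, and `ω'₊(α_low) < 0` when `α_low < α_high` while
`ω'₋(α_low) > 0` when `α_low > α_high`, then the closed interval with endpoints
`α_low` and `α_high` contains a quasi-Wolfe step. -/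
theorem quasi_wolfe_stage_two (ψ Dp Dm : ℝ → ℝ) (ηA ηW : ℝ)
    (hadm : ∀ b : ℝ, 0 < b → AdmissibleOn ψ 0 b Dp Dm)
    (hd0 : Dp 0 < 0)
    (hA : 0 < ηA) (hAW : ηA < ηW) (hW1 : ηW < 1)
    (ω : ℝ → ℝ) (hω : ω = fun t => ψ t - (ψ 0 + t * ηA * Dp 0))
    (αlo αhi : ℝ) (hlo : 0 ≤ αlo) (hhi : 0 ≤ αhi) (hne : αlo ≠ αhi)
    (ha : ω αlo ≤ 0) (hb : ω αlo ≤ ω αhi)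
    (hc1 : αlo < αhi → Dp αlo - ηA * Dp 0 < 0)
    (hc2 : αhi < αlo → 0 < Dm αlo - ηA * Dp 0) :
    ∃ t ∈ Set.uIcc αlo αhi, QuasiWolfeAbs ψ Dp Dm ηA ηW t := by
  set m := min αlo αhi with hmdef
  set M := max αlo αhi with hMdef
  set B := M + 1 with hBdef
  have hMB : M < B := lt_add_one _
  have hm0 : 0 ≤ m := le_min hlo hhi
  have hloM : αlo ≤ M := le_max_left _ _
  have hhiM : αhi ≤ M := le_max_right _ _
  have hB0 : 0 < B := by linarith
  have hcont := (hadm B hB0).cont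
  obtain ⟨S, hSsub, hdiff, hdercont⟩ := (hadm B hB0).finite_except
  have htr := (hadm B hB0).tendsto_right
  have htl := (hadm B hB0).tendsto_left
  set c := ηA * Dp 0 with hcdef
  have hc0 : c < 0 := mul_neg_of_pos_of_neg hA hd0
  set g := fun t : ℝ => ψ t - c * t with hgdef
  have hωg : ∀ t : ℝ, ω t = g t - ψ 0 := by
    intro t; rw [hω]; simp only [hgdef, hcdef]; ring
  have hmM : m < M := min_lt_max.2 hne
  -- Step 1: find a point strictly inside with smaller g value than g αlo
  have step1 : ∃ t0 ∈ Set.Ioo m M, g t0 < g αlo := by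
    rcases hne.lt_or_gt with h | h
    · have hmlo : m = αlo := min_eq_left h.le
      have hMhi : M = αhi := max_eq_right h.le
      have hL : Dp αlo < c := by have := hc1 h; rw [hcdef]; linarith
      obtain ⟨t, htmem, hlt⟩ := quasi_aux_right ψ B S hcont hdiff hlo hL
        (htr αlo ⟨hlo, by linarith⟩) h (by linarith)
      exact ⟨t, by rw [hmlo, hMhi]; exact htmem, hlt⟩
    · have hmlo : m = αhi := min_eq_right h.le
      have hMhi : M = αlo := max_eq_left h.le
      have h0lo : 0 < αlo := lt_of_le_of_lt hhi h
      have hL : c < Dm αlo := by have := hc2 h; rw [hcdef]; linarith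
      obtain ⟨t, htmem, hlt⟩ := quasi_aux_left ψ B S hcont hdiff (by linarith) hL
        (htl αlo ⟨h0lo, by linarith⟩) hhi h
      exact ⟨t, by rw [hmlo, hMhi]; exact htmem, hlt⟩
  obtain ⟨t0, ht0mem, ht0⟩ := step1
  have hsub : Set.Icc m M ⊆ Set.Icc 0 B := Set.Icc_subset_Icc hm0 hMB.le
  have hgc : ContinuousOn g (Set.Icc m M) :=
    (hcont.mono hsub).sub (continuousOn_const.mul continuousOn_id)
  obtain ⟨α, hαmem, hαmin⟩ := isCompact_Icc.exists_isMinOn (Set.nonempty_Icc.2 hmM.le) hgc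
  have hmin : ∀ y ∈ Set.Icc m M, g α ≤ g y := fun y hy => hαmin hy
  have hαlt : g α < g αlo :=
    lt_of_le_of_lt (hmin t0 (Set.Ioo_subset_Icc_self ht0mem)) ht0
  have hhb : g αlo ≤ g αhi := by
    have h1 := hωg αlo; have h2 := hωg αhi; linarith
  have hglom : g αlo ≤ g m := by
    rcases min_choice αlo αhi with h | h <;> rw [← hmdef] at h <;> rw [h]
    exact hhb
  have hgloM : g αlo ≤ g M := by
    rcases max_choice αlo αhi with h | h <;> rw [← hMdef] at h <;> rw [h]
    exact hhb
  have hαm : m < α := lt_of_le_of_ne hαmem.1 (by rintro rfl; linarith)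
  have hαM : α < M := lt_of_le_of_ne hαmem.2 (by rintro rfl; linarith)
  have h0α : 0 < α := lt_of_le_of_lt hm0 hαm
  have hαB : α < B := lt_trans hαM hMB
  have hDp : c ≤ Dp α := by
    by_contra hcon; push_neg at hcon
    obtain ⟨t, htm, hlt⟩ := quasi_aux_right ψ B S hcont hdiff h0α.le hcon
      (htr α ⟨h0α.le, hαB⟩) hαM hMB.le
    exact absurd (hmin t ⟨le_of_lt (lt_trans hαm htm.1), htm.2.le⟩) (not_le.2 hlt)
  have hDm : Dm α ≤ c := by
    by_contra hcon; push_neg at hcon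
    obtain ⟨t, htm, hlt⟩ := quasi_aux_left ψ B S hcont hdiff hαB.le hcon
      (htl α ⟨h0α, hαB.le⟩) hm0 hαm
    exact absurd (hmin t ⟨htm.1.le, le_of_lt (lt_trans htm.2 hαM)⟩) (not_le.2 hlt)
  refine ⟨α, ?_, h0α, ?_, ?_⟩
  · rw [Set.mem_uIcc]
    rcases le_total αlo αhi with h | h
    · left; exact ⟨(min_eq_left h ▸ hαm.le : αlo ≤ α), (max_eq_right h ▸ hαM.le : α ≤ αhi)⟩
    · right; exact ⟨(min_eq_right h ▸ hαm.le : αhi ≤ α), (max_eq_left h ▸ hαM.le : α ≤ αlo)⟩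
  · have h1 : ω αlo = g αlo - ψ 0 := hωg αlo
    have h2 : g α ≤ ψ 0 := by linarith
    have h3 : ψ α - c * α ≤ ψ 0 := h2
    have hcc : c * α = α * ηA * Dp 0 := by rw [hcdef]; ring
    linarith
  · have habs : |Dp 0| = -Dp 0 := abs_of_neg hd0
    rcases le_or_gt (Dp α) 0 with h | h
    · right; left
      rw [abs_of_nonpos h, habs]
      have hcc : c = ηA * Dp 0 := hcdef
      nlinarith
    · right; right
      exact ⟨ne_of_lt (lt_trans (lt_of_le_of_lt hDm hc0) h),
        le_of_lt (lt_of_le_of_lt hDm hc0), h.le⟩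
end

section
/- Let f : ℝⁿ → ℝ be continuously differentiable, let Ω be the box with projection proj_Ω, and fix ε > 0 and η_A ∈ (0,1). Suppose (x_k) ⊂ Ω, (p_k) ⊂ ℝⁿ, (α_k) ⊂ (0,∞), (ε_k), and working sets (W_k) satisfy: ε_0 = ε and ε_k = min{ε, ‖Π_{k−1}ᵀ∇f(x_{k−1})‖} for k ≥ 1; [p_k]_i ≥ 0 whenever [x_k]_i ≤ ℓ_i + ε_k and [p_k]_i ≤ 0 whenever [x_k]_i ≥ u_i − ε_k; and x_{k+1} = proj_Ω(x_k + α_k p_k) with f(x_{k+1}) ≤ f(x_k) + α_k·η_A·∇f(x_k)ᵀp_k. Assume furthermore that (x_k) converges to a nondegenerate stationary point x* of f on Ω and that ‖Π_kᵀ∇f(x_k)‖ → 0 as k → ∞. Then for all k sufficiently large, A_{ε_k}(x_k) = A(x_k) = A(x*), where A(x) = {i : x_i = ℓ_i or x_i = u_i} and A_ε(x) = {i : x_i ≤ ℓ_i + ε or x_i ≥ u_i − ε}. -/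
open scoped Classical

lemma abs_grad_le_projGradNorm {n : ℕ} (f : (Fin n → ℝ) → ℝ) (l u y : Fin n → ℝ)
    (ε : ℝ) (i : Fin n) (h : ¬ InWS f l u y ε i) :
    |gradComp f y i| ≤ projGradNorm f l u y ε := by
  have h1 : (gradComp f y i)^2 ≤ ∑ j, (if InWS f l u y ε j then 0 else gradComp f y j)^2 := by
    have := Finset.single_le_sum
      (f := fun j => (if InWS f l u y ε j then 0 else gradComp f y j)^2)
      (fun j _ => sq_nonneg _) (Finset.mem_univ i)
    simpa [h] using this
  calc |gradComp f y i| = Real.sqrt ((gradComp f y i)^2) := (Real.sqrt_sq_eq_abs _).symm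
  _ ≤ _ := Real.sqrt_le_sqrt h1

lemma mono_from {g : ℕ → ℝ} {K : ℕ} (h : ∀ k ≥ K, g k ≤ g (k+1)) :
    ∀ k ≥ K, ∀ m, k ≤ m → g k ≤ g m := by
  intro k hk m hm
  induction m, hm using Nat.le_induction with
  | base => exact le_rfl
  | succ m hm ih => exact ih.trans (h m (hk.trans hm))

lemma anti_from {g : ℕ → ℝ} {K : ℕ} (h : ∀ k ≥ K, g (k+1) ≤ g k) :
    ∀ k ≥ K, ∀ m, k ≤ m → g m ≤ g k := by
  intro k hk m hm
  induction m, hm using Nat.le_induction with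
  | base => exact le_rfl
  | succ m hm ih => exact (h m (hk.trans hm)).trans ih

/-- **Theorem 5.3: identification of the optimal active set.**
If the iterates of the projected-search active-set method converge to a nondegenerate
stationary point `xs` and `‖Π_kᵀ∇f(x_k)‖ → 0`, then for all sufficiently large `k` the
extended active set `A_{ε_k}(x_k)` coincides with the active set `A(x_k)` and with the
optimal active set `A(xs)`. -/
theorem active_set_identification {n : ℕ} (f : (Fin n → ℝ) → ℝ) (l u : Fin n → ℝ)
    (ε ηA : ℝ)
    (hf : ContDiff ℝ 1 f) (hlu : ∀ i, l i ≤ u i)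
    (hε : 0 < ε) (hηA : 0 < ηA) (hηA1 : ηA < 1)
    (x p : ℕ → Fin n → ℝ) (εs α : ℕ → ℝ)
    (hα : ∀ k, 0 < α k)
    (hxΩ : ∀ k i, l i ≤ x k i ∧ x k i ≤ u i)
    (hε0 : εs 0 = ε)
    (hεrec : ∀ k, εs (k + 1) = min ε (projGradNorm f l u (x k) (εs k)))
    (hplo : ∀ k i, x k i ≤ l i + εs k → 0 ≤ p k i)
    (hphi : ∀ k i, u i - εs k ≤ x k i → p k i ≤ 0)
    (hupd : ∀ k, x (k + 1) = boxPath l u (x k) (p k) (α k))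
    (hdec : ∀ k, f (x (k + 1)) ≤ f (x k) + α k * ηA * fderiv ℝ f (x k) (p k))
    (xs : Fin n → ℝ) (hxsΩ : ∀ i, l i ≤ xs i ∧ xs i ≤ u i)
    (hconv : Filter.Tendsto x Filter.atTop (nhds xs))
    (hstat : ∀ i, l i < xs i → xs i < u i → gradComp f xs i = 0)
    (hnd1 : ∀ i, xs i = l i → l i < u i → 0 < gradComp f xs i)
    (hnd2 : ∀ i, xs i = u i → l i < u i → gradComp f xs i < 0)
    (hP0 : Filter.Tendsto (fun k => projGradNorm f l u (x k) (εs k))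
      Filter.atTop (nhds 0)) :
    ∃ K : ℕ, ∀ k ≥ K,
      {i : Fin n | x k i ≤ l i + εs k ∨ u i - εs k ≤ x k i} =
        {i : Fin n | x k i = l i ∨ x k i = u i} ∧
      {i : Fin n | x k i = l i ∨ x k i = u i} =
        {i : Fin n | xs i = l i ∨ xs i = u i} := by
  classical
  -- εₖ is nonnegative
  have hεnn : ∀ k, 0 ≤ εs k := by
    intro k
    cases k with
    | zero => rw [hε0]; exact hε.le
    | succ k =>
        rw [hεrec]
        exact le_min hε.le (Real.sqrt_nonneg _)
  -- εₖ → 0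
  have hεs0 : Filter.Tendsto εs Filter.atTop (nhds 0) := by
    rw [← Filter.tendsto_add_atTop_iff_nat 1]
    have heq : (fun k => εs (k + 1)) =
        fun k => min ε (projGradNorm f l u (x k) (εs k)) := funext hεrec
    rw [heq]
    have h := (tendsto_const_nhds (x := ε) (f := Filter.atTop)).min hP0
    simpa [min_eq_right hε.le] using h
  -- componentwise convergence of xₖ
  have hxi : ∀ i, Filter.Tendsto (fun k => x k i) Filter.atTop (nhds (xs i)) :=
    tendsto_pi_nhds.mp hconv
  -- convergence of gradient components
  have hgrad : ∀ i, Filter.Tendsto (fun k => gradComp f (x k) i)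
      Filter.atTop (nhds (gradComp f xs i)) := by
    intro i
    have hcf : Continuous fun y => fderiv ℝ f y := hf.continuous_fderiv one_ne_zero
    have hc : Continuous fun y : Fin n → ℝ => fderiv ℝ f y (Pi.single i 1) :=
      hcf.clm_apply continuous_const
    have := (hc.tendsto xs).comp hconv
    simpa [gradComp, Function.comp_def] using this
  -- step monotonicity
  have hstep_ge : ∀ k i, 0 ≤ p k i → x k i ≤ x (k + 1) i := by
    intro k i hp
    rw [hupd]
    simp only [boxPath, boxProj]
    have h1 := (hxΩ k i).1
    have h2 := (hxΩ k i).2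
    have h3 : x k i ≤ x k i + α k * p k i := by nlinarith [hα k]
    split_ifs with ha hb
    · linarith
    · exact h2
    · exact h3
  have hstep_le : ∀ k i, p k i ≤ 0 → x (k + 1) i ≤ x k i := by
    intro k i hp
    rw [hupd]
    simp only [boxPath, boxProj]
    have h1 := (hxΩ k i).1
    have h3 : x k i + α k * p k i ≤ x k i := by nlinarith [hα k]
    split_ifs with ha hb
    · exact h1
    · linarith
    · exact h3
  -- the key per-index eventual statement
  have key : ∀ i : Fin n, ∀ᶠ k in Filter.atTop,
      ((x k i ≤ l i + εs k ∨ u i - εs k ≤ x k i) ↔ (x k i = l i ∨ x k i = u i)) ∧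
      ((x k i = l i ∨ x k i = u i) ↔ (xs i = l i ∨ xs i = u i)) := by
    intro i
    rcases eq_or_lt_of_le (hlu i) with heq | hlt
    · -- degenerate bound: l i = u i
      refine Filter.Eventually.of_forall fun k => ?_
      have hx : x k i = l i := le_antisymm (heq ▸ (hxΩ k i).2) (hxΩ k i).1
      have hxs : xs i = l i := le_antisymm (heq ▸ (hxsΩ i).2) (hxsΩ i).1
      refine ⟨⟨fun _ => Or.inl hx, fun _ => Or.inl ?_⟩,
              ⟨fun _ => Or.inl hxs, fun _ => Or.inl hx⟩⟩
      rw [hx]; linarith [hεnn k]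
    · rcases eq_or_lt_of_le (hxsΩ i).1 with hL | hL
      · -- lower boundary: xs i = l i
        have hc : 0 < gradComp f xs i := hnd1 i hL.symm hlt
        set c := gradComp f xs i with hcdef
        have hg : ∀ᶠ k in Filter.atTop, c / 2 < gradComp f (x k) i :=
          (hgrad i).eventually (eventually_gt_nhds (by linarith))
        have hpg : ∀ᶠ k in Filter.atTop,
            projGradNorm f l u (x k) (εs k) < c / 2 :=
          hP0.eventually (eventually_lt_nhds (by linarith))
        have hev : ∀ᶠ k in Filter.atTop, 0 ≤ p k i := by
          filter_upwards [hg, hpg] with k h1 h2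
          apply hplo k i
          by_contra hnot
          push_neg at hnot
          have hnin : ¬ InWS f l u (x k) (εs k) i := by
            rintro (⟨ha, _⟩ | ⟨_, hb⟩)
            · exact absurd ha (not_le.mpr hnot)
            · linarith
          have h3 := abs_grad_le_projGradNorm f l u (x k) (εs k) i hnin
          have h4 : c / 2 < |gradComp f (x k) i| :=
            lt_of_lt_of_le h1 (le_abs_self _)
          linarith
        obtain ⟨K₁, hK₁⟩ := Filter.eventually_atTop.mp hev
        have hmono : ∀ k ≥ K₁, ∀ m, k ≤ m → x k i ≤ x m i :=
          mono_from (g := fun k => x k i) fun k hk => hstep_ge k i (hK₁ k hk)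
        have hxeq : ∀ k ≥ K₁, x k i = l i := by
          intro k hk
          have hle : x k i ≤ xs i := by
            apply ge_of_tendsto (hxi i)
            filter_upwards [Filter.eventually_ge_atTop k] with m hm
            exact hmono k hk m hm
          exact le_antisymm (hL ▸ hle) (hxΩ k i).1
        filter_upwards [Filter.eventually_ge_atTop K₁] with k hk
        have hx := hxeq k hk
        refine ⟨⟨fun _ => Or.inl hx, fun _ => Or.inl ?_⟩,
                ⟨fun _ => Or.inl hL.symm, fun _ => Or.inl hx⟩⟩
        rw [hx]; linarith [hεnn k]
      · rcases eq_or_lt_of_le (hxsΩ i).2 with hU | hU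
        · -- upper boundary: xs i = u i
          have hc : gradComp f xs i < 0 := hnd2 i hU hlt
          set c := gradComp f xs i with hcdef
          have hg : ∀ᶠ k in Filter.atTop, gradComp f (x k) i < c / 2 :=
            (hgrad i).eventually (eventually_lt_nhds (by linarith))
          have hpg : ∀ᶠ k in Filter.atTop,
              projGradNorm f l u (x k) (εs k) < -(c / 2) :=
            hP0.eventually (eventually_lt_nhds (by linarith))
          have hev : ∀ᶠ k in Filter.atTop, p k i ≤ 0 := by
            filter_upwards [hg, hpg] with k h1 h2
            apply hphi k i
            by_contra hnot
            push_neg at hnot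
            have hnin : ¬ InWS f l u (x k) (εs k) i := by
              rintro (⟨_, ha⟩ | ⟨hb, _⟩)
              · linarith
              · exact absurd hb (not_le.mpr hnot)
            have h3 := abs_grad_le_projGradNorm f l u (x k) (εs k) i hnin
            have h4 : -(c / 2) < |gradComp f (x k) i| := by
              have := neg_le_abs (gradComp f (x k) i)
              linarith
            linarith
          obtain ⟨K₁, hK₁⟩ := Filter.eventually_atTop.mp hev
          have hanti : ∀ k ≥ K₁, ∀ m, k ≤ m → x m i ≤ x k i :=
            anti_from (g := fun k => x k i) fun k hk => hstep_le k i (hK₁ k hk)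
          have hxeq : ∀ k ≥ K₁, x k i = u i := by
            intro k hk
            have hle : xs i ≤ x k i := by
              apply le_of_tendsto (hxi i)
              filter_upwards [Filter.eventually_ge_atTop k] with m hm
              exact hanti k hk m hm
            exact le_antisymm (hxΩ k i).2 (hU ▸ hle)
          filter_upwards [Filter.eventually_ge_atTop K₁] with k hk
          have hx := hxeq k hk
          refine ⟨⟨fun _ => Or.inr hx, fun _ => Or.inr ?_⟩,
                  ⟨fun _ => Or.inr hU, fun _ => Or.inr hx⟩⟩
          rw [hx]; linarith [hεnn k]
        · -- interior: l i < xs i < u i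
          have h1 : ∀ᶠ k in Filter.atTop, l i + εs k < x k i := by
            have ht : Filter.Tendsto (fun k => x k i - εs k)
                Filter.atTop (nhds (xs i - 0)) := (hxi i).sub hεs0
            have h := ht.eventually
              (eventually_gt_nhds (by linarith : l i < xs i - 0))
            filter_upwards [h] with k hk
            linarith
          have h2 : ∀ᶠ k in Filter.atTop, x k i < u i - εs k := by
            have ht : Filter.Tendsto (fun k => x k i + εs k)
                Filter.atTop (nhds (xs i + 0)) := (hxi i).add hεs0
            have h := ht.eventually
              (eventually_lt_nhds (by linarith : xs i + 0 < u i))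
            filter_upwards [h] with k hk
            linarith
          filter_upwards [h1, h2] with k hk1 hk2
          have A1 : ¬(x k i ≤ l i + εs k ∨ u i - εs k ≤ x k i) := by
            push_neg; exact ⟨by linarith, by linarith⟩
          have A2 : ¬(x k i = l i ∨ x k i = u i) := by
            push_neg
            constructor
            · intro h; rw [h] at hk1; linarith [hεnn k]
            · intro h; rw [h] at hk2; linarith [hεnn k]
          have A3 : ¬(xs i = l i ∨ xs i = u i) := by
            push_neg
            exact ⟨by linarith, by linarith⟩
          exact ⟨iff_of_false A1 A2, iff_of_false A2 A3⟩
  have hall := Filter.eventually_all.mpr key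
  obtain ⟨K, hK⟩ := Filter.eventually_atTop.mp hall
  refine ⟨K, fun k hk => ⟨?_, ?_⟩⟩
  · ext i
    exact (hK k hk i).1
  · ext i
    exact (hK k hk i).2
end

section
/- Let ℓ, u ∈ ℝⁿ with ℓ < u componentwise, let B = {v ∈ ℝⁿ : ℓ < v < u} (componentwise), and let M : ℝⁿ → ℝ be continuously differentiable on B. Let v_0 ∈ B be such that the level set L = {v ∈ B : M(v) ≤ M(v_0)} is a compact subset of B. Fix σ ∈ (0,1), γ > 0, η_A ∈ (0,1), and θ > 0. Suppose the sequences (v_k) ⊂ B and (Δv_k) ⊂ ℝⁿ satisfy: ∇M(v_k)ᵀΔv_k < 0 and ‖Δv_k‖ ≤ θ for all k; and v_{k+1} = proj_{Ω_k}(v_k + α_k Δv_k), where Ω_k = {v : v_k − σ(v_k − ℓ) ≤ v ≤ v_k + σ(u − v_k)}, proj_{Ω_k} is the componentwise projection onto Ω_k, and α_k is a quasi-Armijo step for ψ_k(α) = M(proj_{Ω_k}(v_k + αΔv_k)). Then lim_{k→∞} |∇M(v_k)ᵀΔv_k| = 0. -/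
open scoped Classical

/-
The Armijo inequality makes `M (v k)` decrease by at least `η_A α_k |∇M(v_k)ᵀΔv_k|`, and `M` is
bounded below on the compact level set, so `α_k ∇M(v_k)ᵀΔv_k → 0`. If `|∇M(v_k)ᵀΔv_k| ≥ ε` along
a subsequence, we may assume `v_k → v* ∈ B`, and then `α_k → 0`. Near `v*` the projection onto
`Ω_k` is inactive for short steps, and by continuity of `∇M` every short step satisfies the Armijo
inequality. But `α_k < γ` means that the longer step `α_k / σ` was rejected: a contradiction.
-/

open Filter Topology Metric Set

abbrev openBox {ι : Type*} (l u : ι → ℝ) : Set (ι → ℝ) :=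
  {w | ∀ i, l i < w i ∧ w i < u i}

/-- With `dampedUpper`, the corners of the box `Ω_k` around the iterate `v = v_k`. -/
abbrev dampedLower {n : ℕ} (σ : ℝ) (l v : Fin n → ℝ) : Fin n → ℝ :=
  fun i => v i - σ * (v i - l i)

abbrev dampedUpper {n : ℕ} (σ : ℝ) (u v : Fin n → ℝ) : Fin n → ℝ :=
  fun i => v i + σ * (u i - v i)

/-- `m` and `slope` stand for `M(v_k) = ψ_k(0)` and `∇M(v_k)ᵀΔv_k`. -/
def IsQuasiArmijoStep (ψ : ℝ → ℝ) (m slope γ σ η a : ℝ) : Prop :=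
  ∃ t : ℕ, a = γ * σ ^ t ∧ ψ (γ * σ ^ t) ≤ m + γ * σ ^ t * η * slope ∧
    ∀ s < t, ¬ ψ (γ * σ ^ s) ≤ m + γ * σ ^ s * η * slope

namespace IsQuasiArmijoStep

variable {ψ : ℝ → ℝ} {m slope γ σ η a : ℝ}

theorem pos (h : IsQuasiArmijoStep ψ m slope γ σ η a) (hγ : 0 < γ) (hσ : 0 < σ) : 0 < a := by
  obtain ⟨t, rfl, -⟩ := h
  positivity

theorem armijo (h : IsQuasiArmijoStep ψ m slope γ σ η a) : ψ a ≤ m + a * η * slope := by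
  obtain ⟨t, rfl, h, -⟩ := h
  exact h

theorem not_armijo_div (h : IsQuasiArmijoStep ψ m slope γ σ η a) (hσ : σ ≠ 0) (ha : a < γ) :
    ¬ ψ (a / σ) ≤ m + a / σ * η * slope := by
  obtain ⟨t, rfl, -, hfail⟩ := h
  obtain ⟨s, rfl⟩ : ∃ s, t = s + 1 := Nat.exists_eq_succ_of_ne_zero (by rintro rfl; simp at ha)
  rw [pow_succ, ← mul_assoc, mul_div_cancel_right₀ _ hσ]
  exact hfail s s.lt_succ_self

end IsQuasiArmijoStep

theorem tendsto_zero_of_add_le_of_bddBelow {a d : ℕ → ℝ} (hd : ∀ k, 0 ≤ d k)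
    (h : ∀ k, a (k + 1) + d k ≤ a k) (ha : BddBelow (range a)) :
    Tendsto d atTop (𝓝 0) := by
  have hanti : Antitone a := antitone_nat_of_succ_le fun k => by linarith [hd k, h k]
  have hconv := tendsto_atTop_ciInf hanti ha
  have hgap : Tendsto (fun k => a k - a (k + 1)) atTop (𝓝 0) := by
    simpa using hconv.sub (hconv.comp (tendsto_add_atTop_nat 1))
  exact squeeze_zero hd (fun k => by linarith [h k]) hgap

theorem IsCompact.exists_subseq_of_not_tendsto_zero {X : Type*} [TopologicalSpace X]
    [FirstCountableTopology X] {K : Set X} (hK : IsCompact K) {x : ℕ → X} (hx : ∀ k, x k ∈ K)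
    {f : ℕ → ℝ} (hf : ¬ Tendsto f atTop (𝓝 0)) :
    ∃ ε > 0, ∃ x₀ ∈ K, ∃ φ : ℕ → ℕ, StrictMono φ ∧ Tendsto (x ∘ φ) atTop (𝓝 x₀) ∧
      ∀ j, ε ≤ |f (φ j)| := by
  obtain ⟨s, hs, hfreq⟩ := not_tendsto_iff_exists_frequently_notMem.1 hf
  obtain ⟨ε, hε, hball⟩ := Metric.mem_nhds_iff.1 hs
  have hfar : ∃ᶠ k in atTop, ε ≤ |f k| := hfreq.mono fun k hk => by
    simpa [Real.dist_eq] using fun h => hk (hball h)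
  obtain ⟨ψ, hψ, hψε⟩ := extraction_of_frequently_atTop hfar
  obtain ⟨x₀, hx₀, φ, hφ, hconv⟩ := hK.tendsto_subseq fun j => hx (ψ j)
  exact ⟨ε, hε, x₀, hx₀, ψ ∘ φ, hψ.comp hφ, hconv, fun j => hψε (φ j)⟩

theorem ContinuousAt.exists_ball_subset_dist_le {X Y : Type*} [PseudoMetricSpace X]
    [PseudoMetricSpace Y] {f : X → Y} {x₀ : X} {U : Set X} (hf : ContinuousAt f x₀)
    (hU : U ∈ 𝓝 x₀) {C : ℝ} (hC : 0 < C) :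
    ∃ r > 0, ball x₀ r ⊆ U ∧ ∀ y ∈ ball x₀ r, ∀ z ∈ ball x₀ r, dist (f y) (f z) ≤ C := by
  obtain ⟨r, hr, hsub⟩ := Metric.mem_nhds_iff.1
    (inter_mem hU (hf.preimage_mem_nhds (ball_mem_nhds (f x₀) (half_pos hC))))
  refine ⟨r, hr, fun y hy => (hsub hy).1, fun y hy z hz => ?_⟩
  have hy' : dist (f y) (f x₀) < C / 2 := (hsub hy).2
  have hz' : dist (f z) (f x₀) < C / 2 := (hsub hz).2
  linarith [dist_triangle_right (f y) (f z) (f x₀)]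

theorem armijo_of_norm_fderiv_sub_le {E : Type*} [NormedAddCommGroup E] [NormedSpace ℝ E]
    {M : E → ℝ} {s : Set E} (hs : Convex ℝ s) (hM : ∀ y ∈ s, DifferentiableAt ℝ M y)
    {x d : E} {β η C : ℝ} (hx : x ∈ s) (hxd : x + β • d ∈ s) (hβ : 0 ≤ β)
    (hC : ∀ y ∈ s, ‖fderiv ℝ M y - fderiv ℝ M x‖ ≤ C)
    (hCd : C * ‖d‖ ≤ (1 - η) * -fderiv ℝ M x d) :
    M (x + β • d) ≤ M x + β * η * fderiv ℝ M x d := by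
  have hmv := hs.norm_image_sub_le_of_norm_fderiv_le' hM hC hx hxd
  simp only [add_sub_cancel_left, map_smul, smul_eq_mul, norm_smul, Real.norm_eq_abs,
    abs_of_nonneg hβ] at hmv
  have hlin := (abs_le.1 hmv).2
  nlinarith [mul_le_mul_of_nonneg_left hCd hβ]

theorem isOpen_openBox {ι : Type*} [Finite ι] (l u : ι → ℝ) : IsOpen (openBox l u) := by
  simp only [openBox, ofPred_forall, ofPred_and]
  exact isOpen_iInter_of_finite fun i =>
    (isOpen_lt continuous_const (continuous_apply i)).inter
      (isOpen_lt (continuous_apply i) continuous_const)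

theorem norm_le_euclNorm {n : ℕ} (p : Fin n → ℝ) : ‖p‖ ≤ euclNorm p := by
  refine (pi_norm_le_iff_of_nonneg (Real.sqrt_nonneg _)).2 fun i => ?_
  rw [Real.norm_eq_abs, ← Real.sqrt_sq_eq_abs]
  exact Real.sqrt_le_sqrt (Finset.single_le_sum (fun j _ => sq_nonneg (p j)) (Finset.mem_univ i))

theorem boxPath_eq_add_smul {n : ℕ} {l u x p : Fin n → ℝ} {a : ℝ}
    (h : ∀ i, l i ≤ x i + a * p i ∧ x i + a * p i ≤ u i) :
    boxPath l u x p a = x + a • p := by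
  funext i
  simp only [boxPath, boxProj, Pi.add_apply, Pi.smul_apply, smul_eq_mul]
  rw [if_neg (not_lt.2 (h i).1), if_neg (not_lt.2 (h i).2)]

theorem eventually_boxPath_damped_eq {n : ℕ} {ι : Type*} {F : Filter ι} {l u x₀ : Fin n → ℝ}
    {σ : ℝ} (hσ : 0 < σ) (hx₀ : x₀ ∈ openBox l u) {x d : ι → Fin n → ℝ} {β : ι → ℝ}
    (hx : Tendsto x F (𝓝 x₀)) (hβd : Tendsto (fun j => β j • d j) F (𝓝 0)) :
    ∀ᶠ j in F, boxPath (dampedLower σ l (x j)) (dampedUpper σ u (x j)) (x j) (d j) (β j) =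
      x j + β j • d j := by
  have hcoord : ∀ i, ∀ᶠ j in F, 0 < σ * (x j i - l i) + β j * d j i ∧
      0 < σ * (u i - x j i) - β j * d j i := fun i => by
    have hxi := (continuous_apply i).continuousAt.tendsto.comp hx
    have hwi := (continuous_apply i).continuousAt.tendsto.comp hβd
    simp only [Function.comp_def, Pi.smul_apply, smul_eq_mul, Pi.zero_apply] at hxi hwi
    have hlo := ((hxi.sub_const (l i)).const_mul σ).add hwi
    have hhi := ((tendsto_const_nhds (x := u i)).sub hxi).const_mul σ |>.sub hwi
    rw [add_zero] at hlo
    rw [sub_zero] at hhi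
    exact (hlo.eventually_const_lt (mul_pos hσ (sub_pos.2 (hx₀ i).1))).and
      (hhi.eventually_const_lt (mul_pos hσ (sub_pos.2 (hx₀ i).2)))
  filter_upwards [eventually_all.2 hcoord] with j hj
  exact boxPath_eq_add_smul fun i => ⟨by linarith [hj i], by linarith [hj i]⟩

theorem not_tendsto_zero_of_isQuasiArmijoStep {n : ℕ} {M : (Fin n → ℝ) → ℝ} {l u x₀ : Fin n → ℝ}
    {σ γ η θ ε : ℝ} {ι : Type*} {F : Filter ι} [F.NeBot]
    (hM : ContDiffOn ℝ 1 M (openBox l u)) (hσ : 0 < σ) (hγ : 0 < γ) (hη : η < 1)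
    (hθ : 0 < θ) (hε : 0 < ε) (hx₀ : x₀ ∈ openBox l u) {x d : ι → Fin n → ℝ} {a : ι → ℝ}
    (hx : Tendsto x F (𝓝 x₀)) (hd : ∀ j, ‖d j‖ ≤ θ) (hslope : ∀ j, fderiv ℝ M (x j) (d j) ≤ -ε)
    (ha : ∀ j, IsQuasiArmijoStep
      (fun β => M (boxPath (dampedLower σ l (x j)) (dampedUpper σ u (x j)) (x j) (d j) β))
      (M (x j)) (fderiv ℝ M (x j) (d j)) γ σ η (a j)) :
    ¬ Tendsto a F (𝓝 0) := by
  intro ha0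
  have hBopen := isOpen_openBox l u
  have hC : 0 < (1 - η) * ε / θ := div_pos (mul_pos (sub_pos.2 hη) hε) hθ
  have hβ : ∀ j, 0 ≤ a j / σ := fun j => div_nonneg ((ha j).pos hγ hσ).le hσ.le
  obtain ⟨r, hr, hrB, hosc⟩ :=
    ((hM.continuousOn_fderiv_of_isOpen hBopen le_rfl).continuousAt (hBopen.mem_nhds hx₀)
      ).exists_ball_subset_dist_le (hBopen.mem_nhds hx₀) hC
  have hβd : Tendsto (fun j => (a j / σ) • d j) F (𝓝 0) := by
    refine squeeze_zero_norm (fun j => ?_) (by simpa using (ha0.div_const σ).mul_const θ)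
    rw [norm_smul, Real.norm_of_nonneg (hβ j)]
    exact mul_le_mul_of_nonneg_left (hd j) (hβ j)
  have hnext : Tendsto (fun j => x j + (a j / σ) • d j) F (𝓝 x₀) := by
    simpa using hx.add hβd
  obtain ⟨j, hlt, hxj, hnextj, hstraight⟩ := ((ha0.eventually_lt_const hγ).and
    ((hx.eventually (ball_mem_nhds x₀ hr)).and ((hnext.eventually (ball_mem_nhds x₀ hr)).and
      (eventually_boxPath_damped_eq hσ hx₀ hx hβd)))).exists
  refine (ha j).not_armijo_div hσ.ne' hlt ?_
  simp only [hstraight]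
  refine armijo_of_norm_fderiv_sub_le (convex_ball x₀ r)
    (fun y hy => (hM.differentiableOn one_ne_zero).differentiableAt
      (hBopen.mem_nhds (hrB hy))) hxj hnextj (hβ j)
    (fun y hy => (dist_eq_norm _ _).symm.trans_le (hosc y hy (x j) hxj)) ?_
  calc (1 - η) * ε / θ * ‖d j‖ ≤ (1 - η) * ε / θ * θ := mul_le_mul_of_nonneg_left (hd j) hC.le
    _ = (1 - η) * ε := div_mul_cancel₀ _ hθ.ne'
    _ ≤ (1 - η) * -fderiv ℝ M (x j) (d j) := by nlinarith [hslope j]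

theorem interior_quasi_armijo_general {n : ℕ} (M : (Fin n → ℝ) → ℝ) (l u : Fin n → ℝ)
    (σ γ ηA θ : ℝ)
    (hM : ContDiffOn ℝ 1 M {w : Fin n → ℝ | ∀ i, l i < w i ∧ w i < u i})
    (hσ : 0 < σ) (hγ : 0 < γ)
    (hηA : 0 < ηA) (hηA1 : ηA < 1) (hθ : 0 < θ)
    (v dv : ℕ → Fin n → ℝ) (α : ℕ → ℝ)
    (hvB : ∀ k i, l i < v k i ∧ v k i < u i)
    (hcpt : IsCompact {w : Fin n → ℝ | (∀ i, l i < w i ∧ w i < u i) ∧ M w ≤ M (v 0)})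
    (hdesc : ∀ k, fderiv ℝ M (v k) (dv k) < 0)
    (hbd : ∀ k, euclNorm (dv k) ≤ θ)
    (hupd : ∀ k, v (k + 1) =
      boxPath (fun i => v k i - σ * (v k i - l i))
              (fun i => v k i + σ * (u i - v k i)) (v k) (dv k) (α k))
    (hQA : ∀ k, ∃ t : ℕ, α k = γ * σ ^ t ∧
      M (boxPath (fun i => v k i - σ * (v k i - l i))
                 (fun i => v k i + σ * (u i - v k i)) (v k) (dv k) (γ * σ ^ t)) ≤
        M (v k) + (γ * σ ^ t) * ηA * fderiv ℝ M (v k) (dv k) ∧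
      ∀ s : ℕ, s < t →
        ¬ (M (boxPath (fun i => v k i - σ * (v k i - l i))
                      (fun i => v k i + σ * (u i - v k i)) (v k) (dv k) (γ * σ ^ s)) ≤
           M (v k) + (γ * σ ^ s) * ηA * fderiv ℝ M (v k) (dv k))) :
    Filter.Tendsto (fun k => |fderiv ℝ M (v k) (dv k)|) Filter.atTop (nhds 0) := by
  have hstep : ∀ k, IsQuasiArmijoStep (fun β => M (boxPath (dampedLower σ l (v k))
      (dampedUpper σ u (v k)) (v k) (dv k) β)) (M (v k)) (fderiv ℝ M (v k) (dv k)) γ σ ηA (α k) :=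
    hQA
  have hdecrease : ∀ k, 0 ≤ α k * ηA * -fderiv ℝ M (v k) (dv k) := fun k =>
    mul_nonneg (mul_nonneg ((hstep k).pos hγ hσ).le hηA.le) (neg_nonneg.2 (hdesc k).le)
  have harmijo : ∀ k, M (v (k + 1)) + α k * ηA * -fderiv ℝ M (v k) (dv k) ≤ M (v k) := by
    intro k
    have := (hstep k).armijo
    rw [← hupd k] at this
    linarith
  have hlevel : ∀ k, v k ∈ {w | (∀ i, l i < w i ∧ w i < u i) ∧ M w ≤ M (v 0)} := fun k =>
    ⟨hvB k, antitone_nat_of_succ_le (f := fun k => M (v k))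
      (fun k => by linarith [harmijo k, hdecrease k]) k.zero_le⟩
  have hbdd : BddBelow (range fun k => M (v k)) :=
    (hcpt.bddBelow_image (hM.continuousOn.mono fun w hw => hw.1)).mono
      (range_subset_iff.2 fun k => mem_image_of_mem M (hlevel k))
  have hlim := tendsto_zero_of_add_le_of_bddBelow hdecrease harmijo hbdd
  by_contra hcon
  obtain ⟨ε, hε, x₀, hx₀, φ, hφ, hconv, hfar⟩ := hcpt.exists_subseq_of_not_tendsto_zero hlevel hcon
  have hslope : ∀ j, fderiv ℝ M (v (φ j)) (dv (φ j)) ≤ -ε := fun j => by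
    have h := hfar j
    rw [abs_abs, abs_of_neg (hdesc (φ j))] at h
    linarith
  have hα : Tendsto (α ∘ φ) atTop (𝓝 0) := by
    refine squeeze_zero (fun j => ((hstep (φ j)).pos hγ hσ).le) (fun j => ?_)
      (by simpa using (hlim.comp hφ.tendsto_atTop).div_const (ηA * ε))
    rw [Function.comp_apply, le_div_iff₀ (mul_pos hηA hε)]
    nlinarith [mul_le_mul_of_nonneg_left (hslope j)
      (mul_nonneg ((hstep (φ j)).pos hγ hσ).le hηA.le)]
  exact not_tendsto_zero_of_isQuasiArmijoStep hM hσ hγ hηA1 hθ hε hx₀.1 hconv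
    (fun j => (norm_le_euclNorm _).trans (hbd _)) hslope (fun j => hstep (φ j)) hα

/-- **Theorem 5.5: interior projected search with a quasi-Armijo search.**
For iterates `v_{k+1} = proj_{Ω_k}(v_k + α_k Δv_k)` with
`Ω_k = {v : v_k − σ(v_k − ℓ) ≤ v ≤ v_k + σ(u − v_k)}` and `α_k` a quasi-Armijo step,
`|∇M(v_k)ᵀΔv_k| → 0`. -/
theorem interior_quasi_armijo {n : ℕ} (M : (Fin n → ℝ) → ℝ) (l u : Fin n → ℝ)
    (σ γ ηA θ : ℝ)
    (hlu : ∀ i, l i < u i)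
    (hM : ContDiffOn ℝ 1 M {w : Fin n → ℝ | ∀ i, l i < w i ∧ w i < u i})
    (hσ : 0 < σ) (hσ1 : σ < 1) (hγ : 0 < γ)
    (hηA : 0 < ηA) (hηA1 : ηA < 1) (hθ : 0 < θ)
    (v dv : ℕ → Fin n → ℝ) (α : ℕ → ℝ)
    (hvB : ∀ k i, l i < v k i ∧ v k i < u i)
    (hcpt : IsCompact {w : Fin n → ℝ | (∀ i, l i < w i ∧ w i < u i) ∧ M w ≤ M (v 0)})
    (hdesc : ∀ k, fderiv ℝ M (v k) (dv k) < 0)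
    (hbd : ∀ k, euclNorm (dv k) ≤ θ)
    (hupd : ∀ k, v (k + 1) =
      boxPath (fun i => v k i - σ * (v k i - l i))
              (fun i => v k i + σ * (u i - v k i)) (v k) (dv k) (α k))
    (hQA : ∀ k, ∃ t : ℕ, α k = γ * σ ^ t ∧
      M (boxPath (fun i => v k i - σ * (v k i - l i))
                 (fun i => v k i + σ * (u i - v k i)) (v k) (dv k) (γ * σ ^ t)) ≤
        M (v k) + (γ * σ ^ t) * ηA * fderiv ℝ M (v k) (dv k) ∧
      ∀ s : ℕ, s < t →
        ¬ (M (boxPath (fun i => v k i - σ * (v k i - l i))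
                      (fun i => v k i + σ * (u i - v k i)) (v k) (dv k) (γ * σ ^ s)) ≤
           M (v k) + (γ * σ ^ s) * ηA * fderiv ℝ M (v k) (dv k))) :
    Filter.Tendsto (fun k => |fderiv ℝ M (v k) (dv k)|) Filter.atTop (nhds 0) :=
  interior_quasi_armijo_general M l u σ γ ηA θ hM hσ hγ hηA hηA1 hθ v dv α hvB hcpt hdesc hbd hupd
    hQA
end

section
/- Let Ω be the box with projection proj_Ω, let x ∈ Ω, p ∈ ℝⁿ, and set x(α) = proj_Ω(x + αp). Then for every α ≥ 0 and every index i, the function β ↦ [x(β)]_i has right derivative [P_{x(α)}(p)]_i at α; that is, the derivative of [x(·)]_i within the interval [α, ∞) at α exists and equals [P_{x(α)}(p)]_i. -/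
open scoped Classical
open scoped Topology

/-- **Right derivative of the projected path** (Section 3.2): for feasible `x` and
`α ≥ 0`, the `i`-th component of `β ↦ proj_Ω(x + βp)` has right derivative
`[P_{x(α)}(p)]_i` at `α`. -/
theorem boxPath_right_deriv {n : ℕ} (l u x p : Fin n → ℝ)
    (hlu : ∀ i, l i ≤ u i) (hx : ∀ i, l i ≤ x i ∧ x i ≤ u i)
    (α : ℝ) (hα : 0 ≤ α) (i : Fin n) :
    HasDerivWithinAt (fun β => boxPath l u x p β i)
      (projDir l u (boxPath l u x p α) p i) (Set.Ici α) α := by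
  have hL : l i ≤ x i := (hx i).1
  have hU : x i ≤ u i := (hx i).2
  have hg : ∀ β : ℝ, boxPath l u x p β i =
      if x i + β * p i < l i then l i else if u i < x i + β * p i then u i
      else x i + β * p i := fun β => rfl
  have hlin : HasDerivWithinAt (fun β : ℝ => x i + β * p i) (p i) (Set.Ici α) α := by
    simpa using (((hasDerivAt_id α).mul_const (p i)).const_add (x i)).hasDerivWithinAt
  rcases lt_trichotomy (p i) 0 with hq | hq | hq
  · -- q < 0 : no upper clamping for β ≥ α
    have hnotU : ∀ β ≥ α, ¬ (u i < x i + β * p i) := by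
      intro β hβ
      have : β * p i ≤ 0 := mul_nonpos_of_nonneg_of_nonpos (hα.trans hβ) hq.le
      exact not_lt.2 (by linarith)
    by_cases hyL : x i + α * p i ≤ l i
    · -- constant L on Ici α
      have hyval : boxPath l u x p α i = l i := by
        rw [hg]
        rcases lt_or_eq_of_le hyL with h | h
        · rw [if_pos h]
        · rw [if_neg (by linarith), if_neg (hnotU α le_rfl), h]
      have hd : projDir l u (boxPath l u x p α) p i = 0 := by
        unfold projDir
        rw [if_pos (Or.inl ⟨hyval, hq⟩)]
      rw [hd]
      refine (hasDerivWithinAt_const α _ (l i)).congr_of_eventuallyEq ?_ hyval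
      filter_upwards [self_mem_nhdsWithin] with β (hβ : α ≤ β)
      rw [hg]
      have : x i + β * p i ≤ l i := by nlinarith
      rcases lt_or_eq_of_le this with h | h
      · rw [if_pos h]
      · rw [if_neg (by linarith), if_neg (hnotU β hβ), h]
    · -- linear near α
      push_neg at hyL
      have hyval : boxPath l u x p α i = x i + α * p i := by
        rw [hg, if_neg (not_lt.2 hyL.le), if_neg (hnotU α le_rfl)]
      have hd : projDir l u (boxPath l u x p α) p i = p i := by
        unfold projDir
        rw [if_neg]
        push_neg
        rw [hyval]
        exact ⟨fun h => absurd h (ne_of_gt hyL), fun _ => hq.le⟩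
      rw [hd]
      have hSmem : {β : ℝ | l i < x i + β * p i} ∈ 𝓝 α :=
        (isOpen_lt continuous_const (by continuity)).mem_nhds hyL
      refine hlin.congr_of_eventuallyEq ?_ hyval
      filter_upwards [mem_nhdsWithin_of_mem_nhds hSmem, self_mem_nhdsWithin] with β hβL
        (hβ : α ≤ β)
      rw [hg, if_neg (not_lt.2 (le_of_lt hβL)), if_neg (hnotU β hβ)]
  · -- q = 0 : constant
    have hconst : ∀ β : ℝ, boxPath l u x p β i = boxPath l u x p α i := by
      intro β; rw [hg, hg, hq]; simp
    have hd : projDir l u (boxPath l u x p α) p i = 0 := by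
      unfold projDir
      split <;> simp [hq]
    rw [hd]
    refine (hasDerivWithinAt_const α _ (boxPath l u x p α i)).congr_of_eventuallyEq ?_ rfl
    filter_upwards [self_mem_nhdsWithin] with β _
    exact hconst β
  · -- q > 0 : no lower clamping for β ≥ α
    have hnotL : ∀ β ≥ α, ¬ (x i + β * p i < l i) := by
      intro β hβ
      have : 0 ≤ β * p i := mul_nonneg (hα.trans hβ) hq.le
      exact not_lt.2 (by linarith)
    by_cases hyU : u i ≤ x i + α * p i
    · -- constant U on Ici α
      have hyval : boxPath l u x p α i = u i := by
        rw [hg, if_neg (hnotL α le_rfl)]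
        rcases lt_or_eq_of_le hyU with h | h
        · rw [if_pos h]
        · rw [if_neg (by linarith), ← h]
      have hd : projDir l u (boxPath l u x p α) p i = 0 := by
        unfold projDir
        rw [if_pos (Or.inr ⟨hyval, hq⟩)]
      rw [hd]
      refine (hasDerivWithinAt_const α _ (u i)).congr_of_eventuallyEq ?_ hyval
      filter_upwards [self_mem_nhdsWithin] with β (hβ : α ≤ β)
      rw [hg, if_neg (hnotL β hβ)]
      have : u i ≤ x i + β * p i := by nlinarith
      rcases lt_or_eq_of_le this with h | h
      · rw [if_pos h]
      · rw [if_neg (by linarith), ← h]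
    · -- linear near α
      push_neg at hyU
      have hyval : boxPath l u x p α i = x i + α * p i := by
        rw [hg, if_neg (hnotL α le_rfl), if_neg (not_lt.2 hyU.le)]
      have hd : projDir l u (boxPath l u x p α) p i = p i := by
        unfold projDir
        rw [if_neg]
        push_neg
        rw [hyval]
        exact ⟨fun _ => hq.le, fun h => absurd h (ne_of_lt hyU)⟩
      rw [hd]
      have hSmem : {β : ℝ | x i + β * p i < u i} ∈ 𝓝 α :=
        (isOpen_lt (by continuity) continuous_const).mem_nhds hyU
      refine hlin.congr_of_eventuallyEq ?_ hyval
      filter_upwards [mem_nhdsWithin_of_mem_nhds hSmem, self_mem_nhdsWithin] with β hβU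
        (hβ : α ≤ β)
      rw [hg, if_neg (hnotL β hβ), if_neg (not_lt.2 (le_of_lt hβU))]
end

section
/- Let Ω be the box with projection proj_Ω, let x ∈ Ω, p ∈ ℝⁿ, and set x(α) = proj_Ω(x + αp). Then for every α > 0 and every index i, the function β ↦ [x(β)]_i has left derivative [P⁻_{x(α)}(p)]_i at α; that is, the derivative of [x(·)]_i within the interval (−∞, α] at α exists and equals [P⁻_{x(α)}(p)]_i. -/
open scoped Classical

/-- **Left derivative of the projected path** (Section 3.2): for feasible `x` and
`α > 0`, the `i`-th component of `β ↦ proj_Ω(x + βp)` has left derivative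
`[P⁻_{x(α)}(p)]_i` at `α`. -/
theorem boxPath_left_deriv {n : ℕ} (l u x p : Fin n → ℝ)
    (hlu : ∀ i, l i ≤ u i) (hx : ∀ i, l i ≤ x i ∧ x i ≤ u i)
    (α : ℝ) (hα : 0 < α) (i : Fin n) :
    HasDerivWithinAt (fun β => boxPath l u x p β i)
      (projDirMinus l u x p α i) (Set.Iic α) α := by
  have hg : ∀ β : ℝ, boxPath l u x p β i =
      if x i + β * p i < l i then l i else if u i < x i + β * p i then u i
        else x i + β * p i := fun β => rfl
  have hlin : HasDerivWithinAt (fun β : ℝ => x i + β * p i) (p i) (Set.Iic α) α :=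
    by simpa using (((hasDerivAt_id α).mul_const (p i)).const_add (x i)).hasDerivWithinAt
  rcases lt_trichotomy (p i) 0 with hp | hp | hp
  · -- p i < 0
    rcases le_or_gt (l i) (x i + α * p i) with hL | hL
    · -- no truncation at α; left derivative is p i
      have hD : projDirMinus l u x p α i = p i := by
        by_cases hk : IsKink l u x p α i
        · simp [projDirMinus, hk]
        · have hne : x i + α * p i ≠ l i := fun h => hk (Or.inl ⟨h, hp⟩)
          have htgt : l i < x i + α * p i := lt_of_le_of_ne hL (Ne.symm hne)
          have htlt : x i + α * p i < u i := by nlinarith [(hx i).2]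
          have hb : boxPath l u x p α i = x i + α * p i := by
            rw [hg, if_neg (not_lt.2 htgt.le), if_neg (not_lt.2 htlt.le)]
          rw [projDirMinus, if_neg hk, projDir, if_neg]
          rintro (⟨h1, _⟩ | ⟨h1, h2⟩)
          · exact hne (hb ▸ h1)
          · exact absurd h2 (not_lt.2 hp.le)
      have heq : (fun β => boxPath l u x p β i) =ᶠ[nhdsWithin α (Set.Iic α)]
          (fun β : ℝ => x i + β * p i) := by
        filter_upwards [Ioc_mem_nhdsLE (half_lt_self hα)] with β hβ
        have h1 : l i ≤ x i + β * p i := by nlinarith [hβ.1, hβ.2]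
        have h2 : x i + β * p i ≤ u i := by nlinarith [(hx i).2, hβ.1]
        rw [hg, if_neg (not_lt.2 h1), if_neg (not_lt.2 h2)]
      have hbα : boxPath l u x p α i = x i + α * p i := by
        have h2 : x i + α * p i ≤ u i := by nlinarith [(hx i).2]
        rw [hg, if_neg (not_lt.2 hL), if_neg (not_lt.2 h2)]
      rw [hD]
      exact hlin.congr_of_eventuallyEq heq hbα
    · -- truncated below: locally constant l i, derivative 0
      have hb : boxPath l u x p α i = l i := by rw [hg, if_pos hL]
      have hD : projDirMinus l u x p α i = 0 := by
        have hk : ¬ IsKink l u x p α i := by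
          rintro (⟨h1, _⟩ | ⟨h1, h2⟩)
          · exact absurd h1 (ne_of_lt hL)
          · exact absurd h2 (not_lt.2 hp.le)
        rw [projDirMinus, if_neg hk, projDir, if_pos (Or.inl ⟨hb, hp⟩)]
      have hmem : {β : ℝ | x i + β * p i < l i} ∈ nhds α :=
        (isOpen_lt (by continuity) continuous_const).mem_nhds hL
      have heq : (fun β => boxPath l u x p β i) =ᶠ[nhdsWithin α (Set.Iic α)]
          (fun _ : ℝ => l i) := by
        filter_upwards [nhdsWithin_le_nhds hmem] with β hβ
        rw [hg, if_pos hβ]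
      rw [hD]
      exact (hasDerivWithinAt_const α _ (l i)).congr_of_eventuallyEq heq hb
  · -- p i = 0 : constant path
    have hD : projDirMinus l u x p α i = 0 := by
      have hk : ¬ IsKink l u x p α i := by
        rintro (⟨_, h2⟩ | ⟨_, h2⟩) <;> rw [hp] at h2 <;> linarith
      rw [projDirMinus, if_neg hk, projDir]
      split
      · rfl
      · exact hp
    have hbα : boxPath l u x p α i = x i := by
      rw [hg, hp]
      simp [not_lt.2 (hx i).1, not_lt.2 (hx i).2]
    have heq : (fun β => boxPath l u x p β i) =ᶠ[nhdsWithin α (Set.Iic α)]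
        (fun _ : ℝ => x i) := by
      filter_upwards with β
      rw [hg, hp]
      simp [not_lt.2 (hx i).1, not_lt.2 (hx i).2]
    rw [hD]
    exact (hasDerivWithinAt_const α _ (x i)).congr_of_eventuallyEq heq hbα
  · -- p i > 0
    rcases le_or_gt (x i + α * p i) (u i) with hU | hU
    · have hD : projDirMinus l u x p α i = p i := by
        by_cases hk : IsKink l u x p α i
        · simp [projDirMinus, hk]
        · have hne : x i + α * p i ≠ u i := fun h => hk (Or.inr ⟨h, hp⟩)
          have htlt : x i + α * p i < u i := lt_of_le_of_ne hU hne
          have htgt : l i < x i + α * p i := by nlinarith [(hx i).1]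
          have hb : boxPath l u x p α i = x i + α * p i := by
            rw [hg, if_neg (not_lt.2 htgt.le), if_neg (not_lt.2 htlt.le)]
          rw [projDirMinus, if_neg hk, projDir, if_neg]
          rintro (⟨h1, h2⟩ | ⟨h1, _⟩)
          · exact absurd h2 (not_lt.2 hp.le)
          · exact hne (hb ▸ h1)
      have heq : (fun β => boxPath l u x p β i) =ᶠ[nhdsWithin α (Set.Iic α)]
          (fun β : ℝ => x i + β * p i) := by
        filter_upwards [Ioc_mem_nhdsLE (half_lt_self hα)] with β hβ
        have h1 : l i ≤ x i + β * p i := by nlinarith [(hx i).1, hβ.1]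
        have h2 : x i + β * p i ≤ u i := by nlinarith [hβ.2]
        rw [hg, if_neg (not_lt.2 h1), if_neg (not_lt.2 h2)]
      have hbα : boxPath l u x p α i = x i + α * p i := by
        have h1 : l i ≤ x i + α * p i := by nlinarith [(hx i).1]
        rw [hg, if_neg (not_lt.2 h1), if_neg (not_lt.2 hU)]
      rw [hD]
      exact hlin.congr_of_eventuallyEq heq hbα
    · have hb : boxPath l u x p α i = u i := by
        have h1 : ¬ x i + α * p i < l i := not_lt.2 (le_trans (hlu i) hU.le)
        rw [hg, if_neg h1, if_pos hU]
      have hD : projDirMinus l u x p α i = 0 := by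
        have hk : ¬ IsKink l u x p α i := by
          rintro (⟨_, h2⟩ | ⟨h1, _⟩)
          · exact absurd h2 (not_lt.2 hp.le)
          · exact absurd h1 (ne_of_gt hU)
        rw [projDirMinus, if_neg hk, projDir, if_pos (Or.inr ⟨hb, hp⟩)]
      have hmem : {β : ℝ | u i < x i + β * p i} ∈ nhds α :=
        (isOpen_lt continuous_const (by continuity)).mem_nhds hU
      have heq : (fun β => boxPath l u x p β i) =ᶠ[nhdsWithin α (Set.Iic α)]
          (fun _ : ℝ => u i) := by
        filter_upwards [nhdsWithin_le_nhds hmem] with β hβ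
        have h1 : ¬ x i + β * p i < l i := not_lt.2 (le_trans (hlu i) (le_of_lt hβ))
        rw [hg, if_neg h1, if_pos hβ]
      rw [hD]
      exact (hasDerivWithinAt_const α _ (u i)).congr_of_eventuallyEq heq hb
end

section
/- Let f : ℝⁿ → ℝ be continuously differentiable, let Ω be the box with projection proj_Ω, let x ∈ Ω, p ∈ ℝⁿ, and set x(α) = proj_Ω(x + αp) and ψ(α) = f(x(α)). Then for every α ≥ 0, the right derivative of ψ at α exists and equals ∇f(x(α))ᵀP_{x(α)}(p); that is, the derivative of ψ within the interval [α, ∞) at α exists and equals ∇f(x(α))ᵀP_{x(α)}(p). -/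
open scoped Classical

/-- **Right derivative of the search function** (Section 3.2): for `f` continuously
differentiable, feasible `x` and `α ≥ 0`, `ψ(β) = f(proj_Ω(x + βp))` has right
derivative `∇f(x(α))ᵀP_{x(α)}(p)` at `α`. -/
theorem psi_right_deriv {n : ℕ} (f : (Fin n → ℝ) → ℝ) (l u x p : Fin n → ℝ)
    (hf : ContDiff ℝ 1 f)
    (hlu : ∀ i, l i ≤ u i) (hx : ∀ i, l i ≤ x i ∧ x i ≤ u i)
    (α : ℝ) (hα : 0 ≤ α) :
    HasDerivWithinAt (fun β => f (boxPath l u x p β))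
      (psiDp f l u x p α) (Set.Ici α) α := by
  have hy : boxPath l u x p α = boxProj l u (fun i => x i + α * p i) := rfl
  have hpath : ∀ i, HasDerivWithinAt (fun β => boxPath l u x p β i)
      (projDir l u (boxPath l u x p α) p i) (Set.Ici α) α := by
    intro i
    have hli := (hx i).1
    have hui := (hx i).2
    rcases lt_trichotomy (p i) 0 with hp | hp | hp
    · -- p i < 0
      have hsa : x i + α * p i ≤ u i := by nlinarith
      by_cases hc : x i + α * p i ≤ l i
      · -- clamped at l i for β ≥ α
        have heq : ∀ β ∈ Set.Ici α, boxPath l u x p β i = l i := by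
          intro β hβ
          have hb : x i + β * p i ≤ l i := by
            have : β * p i ≤ α * p i := mul_le_mul_of_nonpos_right hβ hp.le
            linarith
          simp only [boxPath, boxProj]
          rcases lt_or_eq_of_le hb with h | h
          · simp [h]
          · have : ¬ (x i + β * p i < l i) := by linarith
            have h2 : ¬ (u i < x i + β * p i) := by
              have := hlu i; linarith
            have := hlu i
            rw [if_neg (by linarith), h, if_neg (by linarith : ¬ u i < l i)]
        have hyi : boxPath l u x p α i = l i := heq α Set.self_mem_Ici
        have hd : projDir l u (boxPath l u x p α) p i = 0 := by
          simp [projDir, hyi, hp]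
        rw [hd]
        exact (hasDerivWithinAt_const α (Set.Ici α) (l i)).congr heq (heq α Set.self_mem_Ici)
      · -- s α > l i : path equals s near α on the right
        push_neg at hc
        have hyi : boxPath l u x p α i = x i + α * p i := by
          simp only [boxPath, boxProj]
          have h1 : ¬ (x i + α * p i < l i) := by linarith
          have h2 : ¬ (u i < x i + α * p i) := by linarith
          simp [h1, h2]
        have hd : projDir l u (boxPath l u x p α) p i = p i := by
          simp only [projDir, hyi]
          have h1 : ¬ (x i + α * p i = l i) := by linarith
          have h2 : ¬ (0 : ℝ) < p i := by linarith
          simp [h1, h2]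
        rw [hd]
        have hS : {β : ℝ | l i < x i + β * p i} ∈ nhds α := by
          have : IsOpen {β : ℝ | l i < x i + β * p i} :=
            isOpen_lt continuous_const (by continuity)
          exact this.mem_nhds hc
        have hderiv : HasDerivWithinAt (fun β : ℝ => x i + β * p i) (p i)
            (Set.Ici α) α := by
          simpa [mul_comm] using (((hasDerivAt_id α).const_mul (p i)).const_add (x i)
            |>.hasDerivWithinAt (s := Set.Ici α))
        refine hderiv.congr_of_eventuallyEq ?_ hyi
        filter_upwards [self_mem_nhdsWithin, mem_nhdsWithin_of_mem_nhds hS]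
          with β hβ hβS
        have hb2 : x i + β * p i ≤ u i := by
          have : β * p i ≤ α * p i := mul_le_mul_of_nonpos_right hβ hp.le
          linarith
        simp only [boxPath, boxProj]
        have h1 : ¬ (x i + β * p i < l i) := not_lt.2 hβS.le
        have h2 : ¬ (u i < x i + β * p i) := not_lt.2 hb2
        simp [h1, h2]
    · -- p i = 0
      have heq : ∀ β ∈ Set.Ici α, boxPath l u x p β i = x i := by
        intro β _
        simp only [boxPath, boxProj, hp, mul_zero, add_zero]
        have h1 : ¬ (x i < l i) := not_lt.2 hli
        have h2 : ¬ (u i < x i) := not_lt.2 hui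
        simp [h1, h2]
      have hd : projDir l u (boxPath l u x p α) p i = 0 := by
        simp [projDir, hp]
      rw [hd]
      exact (hasDerivWithinAt_const α (Set.Ici α) (x i)).congr heq (heq α Set.self_mem_Ici)
    · -- 0 < p i
      have hsa : l i ≤ x i + α * p i := by nlinarith
      by_cases hc : u i ≤ x i + α * p i
      · -- clamped at u i for β ≥ α
        have heq : ∀ β ∈ Set.Ici α, boxPath l u x p β i = u i := by
          intro β hβ
          have hb : u i ≤ x i + β * p i := by
            have : α * p i ≤ β * p i := mul_le_mul_of_nonneg_right hβ hp.le
            linarith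
          simp only [boxPath, boxProj]
          have h1 : ¬ (x i + β * p i < l i) := by
            have := hlu i; linarith
          rcases lt_or_eq_of_le hb with h | h
          · simp [h1, h]
          · have h2 : ¬ (u i < x i + β * p i) := by linarith
            have := hlu i
            rw [if_neg h1, if_neg h2, ← h]
        have hyi : boxPath l u x p α i = u i := heq α Set.self_mem_Ici
        have hd : projDir l u (boxPath l u x p α) p i = 0 := by
          simp [projDir, hyi, hp]
        rw [hd]
        exact (hasDerivWithinAt_const α (Set.Ici α) (u i)).congr heq (heq α Set.self_mem_Ici)
      · push_neg at hc
        have hyi : boxPath l u x p α i = x i + α * p i := by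
          simp only [boxPath, boxProj]
          have h1 : ¬ (x i + α * p i < l i) := by linarith
          have h2 : ¬ (u i < x i + α * p i) := by linarith
          simp [h1, h2]
        have hd : projDir l u (boxPath l u x p α) p i = p i := by
          simp only [projDir, hyi]
          have h1 : ¬ (x i + α * p i = u i) := by linarith
          have h2 : ¬ (p i < 0) := by linarith
          simp [h1, h2]
        rw [hd]
        have hS : {β : ℝ | x i + β * p i < u i} ∈ nhds α := by
          have : IsOpen {β : ℝ | x i + β * p i < u i} :=
            isOpen_lt (by continuity) continuous_const
          exact this.mem_nhds hc
        have hderiv : HasDerivWithinAt (fun β : ℝ => x i + β * p i) (p i)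
            (Set.Ici α) α := by
          simpa [mul_comm] using (((hasDerivAt_id α).const_mul (p i)).const_add (x i)
            |>.hasDerivWithinAt (s := Set.Ici α))
        refine hderiv.congr_of_eventuallyEq ?_ hyi
        filter_upwards [self_mem_nhdsWithin, mem_nhdsWithin_of_mem_nhds hS]
          with β hβ hβS
        have hb1 : l i ≤ x i + β * p i := by
          have : α * p i ≤ β * p i := mul_le_mul_of_nonneg_right hβ hp.le
          linarith
        simp only [boxPath, boxProj]
        have h1 : ¬ (x i + β * p i < l i) := not_lt.2 hb1
        have h2 : ¬ (u i < x i + β * p i) := not_lt.2 hβS.le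
        simp [h1, h2]
  have hpath' : HasDerivWithinAt (fun β => boxPath l u x p β)
      (projDir l u (boxPath l u x p α) p) (Set.Ici α) α :=
    hasDerivWithinAt_pi.mpr hpath
  have hfd : HasFDerivAt f (fderiv ℝ f (boxPath l u x p α)) (boxPath l u x p α) :=
    (hf.differentiable one_ne_zero (boxPath l u x p α)).hasFDerivAt
  exact hfd.comp_hasDerivWithinAt α hpath'
end
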